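/- arXiv:1702.06203 — 3 statements merged into one kernel-verified Lean document; each statement's English description precedes it below -/
import Mathlib

section
/- Let G be a k-edge-connected graph with spanning forest F, and let S be a nonempty subset of V(G) such that the graph G/F obtained by contracting each component of F is k-edge-connected. Then ω(G \ [S,F]) ≤ Σ_{v∈S} (d_G(v,F)/k + 1) − (2/k)·e_G(S,F), where d_G(v,F) is the number of edges of G incident to v whose two ends lie in different components of F, and e_G(S,F) is the number of edges of G with both ends in S joining different components of F. -/
open SimpleGraph

variable {V : Type*}

/-- Number of connected components. -/
noncomputable def numComponents (G : SimpleGraph V) : ℕ :=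
  Nat.card G.ConnectedComponent

/-- Degree of a vertex. -/
noncomputable def deg (G : SimpleGraph V) (v : V) : ℕ := (G.neighborSet v).ncard

/-- Number of edges of `G` with both ends in `S`. -/
noncomputable def edgesIn (G : SimpleGraph V) (S : Set V) : ℕ :=
  {e ∈ G.edgeSet | ∀ v ∈ e, v ∈ S}.ncard

/-- `G \ [S, F]`: remove all edges incident to `S` except edges of `F`. -/
def delExcept (G F : SimpleGraph V) (S : Set V) : SimpleGraph V where
  Adj x y := G.Adj x y ∧ (F.Adj x y ∨ (x ∉ S ∧ y ∉ S))
  symm := ⟨by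
    rintro x y ⟨h1, h2⟩
    exact ⟨h1.symm, h2.elim (fun hf => Or.inl hf.symm) (fun hc => Or.inr ⟨hc.2, hc.1⟩)⟩⟩
  loopless := ⟨fun x h => G.irrefl h.1⟩

/-- `m`-tree-connected: contains `m` pairwise edge-disjoint spanning trees. -/
def IsTreeConnected (m : ℕ) (G : SimpleGraph V) : Prop :=
  ∃ T : Fin m → SimpleGraph V,
    (∀ i, T i ≤ G) ∧ (∀ i, (T i).Connected ∧ (T i).IsAcyclic) ∧
    ∀ i j, i ≠ j → Disjoint (T i).edgeSet (T j).edgeSet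

/-- Two vertices lie in a common `m`-tree-connected induced subgraph, i.e. in the same
`m`-tree-connected component. -/
def sameTC (m : ℕ) (G : SimpleGraph V) (u v : V) : Prop :=
  ∃ W : Set V, u ∈ W ∧ v ∈ W ∧ IsTreeConnected m (G.induce W)

/-- Tree-connectivity measure `Ω_m`. -/
noncomputable def Omega (m : ℕ) (G : SimpleGraph V) : ℝ :=
  (Nat.card (Quot (sameTC m G)) : ℝ) -
    ({e ∈ G.edgeSet | ∃ x y, e = s(x, y) ∧ ¬ sameTC m G x y}.ncard : ℝ) / m

/-- `k`-edge-connected. -/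
def EdgeConnected (k : ℕ) (G : SimpleGraph V) : Prop :=
  ∀ E' : Set (Sym2 V), E'.ncard < k → (G.deleteEdges E').Connected

/-- Contraction of a vertex set to a single vertex. -/
noncomputable def vrep (X : Set V) (v : V) : Option {v : V // v ∉ X} :=
  @dite _ (v ∈ X) (Classical.dec _) (fun _ => none) (fun h => some ⟨v, h⟩)

noncomputable def contract (G : SimpleGraph V) (X : Set V) :
    SimpleGraph (Option {v : V // v ∉ X}) where
  Adj a b := a ≠ b ∧ ∃ x y, G.Adj x y ∧ vrep X x = a ∧ vrep X y = b
  symm := ⟨by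
    rintro a b ⟨hne, x, y, h, hx, hy⟩
    exact ⟨hne.symm, y, x, h.symm, hy, hx⟩⟩
  loopless := ⟨fun a h => h.1 rfl⟩

/-- Contraction of every component of `F`. -/
def contractComponents (G F : SimpleGraph V) : SimpleGraph F.ConnectedComponent where
  Adj a b := a ≠ b ∧ ∃ x y, G.Adj x y ∧ F.connectedComponentMk x = a ∧ F.connectedComponentMk y = b
  symm := ⟨by
    rintro a b ⟨hne, x, y, h, hx, hy⟩
    exact ⟨hne.symm, y, x, h.symm, hy, hx⟩⟩
  loopless := ⟨fun a h => h.1 rfl⟩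

/-- Number of edges of `G` incident to `v` joining different components of `F`. -/
noncomputable def degSep (G F : SimpleGraph V) (v : V) : ℕ :=
  {w | G.Adj v w ∧ ¬ F.Reachable v w}.ncard

/-- Number of edges of `G` with both ends in `S` joining different components of `F`. -/
noncomputable def edgesInSep (G F : SimpleGraph V) (S : Set V) : ℕ :=
  {e : Sym2 V | ∃ x y, e = s(x, y) ∧ G.Adj x y ∧ x ∈ S ∧ y ∈ S ∧ ¬ F.Reachable x y}.ncard

/-- `K_{1,n}`-free. -/
def K1nFree (n : ℕ) (G : SimpleGraph V) : Prop :=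
  ¬ ∃ (c : V) (A : Finset V), A.card = n ∧ (∀ a ∈ A, G.Adj c a) ∧
      ∀ a ∈ A, ∀ b ∈ A, a ≠ b → ¬ G.Adj a b

/-- A spanning closed walk meeting each vertex `v` at most `f v` times. -/
def HasClosedSpanningWalk [DecidableEq V] (G : SimpleGraph V) (f : V → ℕ) : Prop :=
  ∃ (u : V) (w : G.Walk u u), (∀ v, v ∈ w.support) ∧ ∀ v, w.support.tail.count v ≤ f v

/-- If `G` is `k`-edge-connected with spanning forest `F` such that `G/F` is
`k`-edge-connected and `S ≠ ∅`, then
`ω(G \ [S,F]) ≤ Σ_{v∈S} (d_G(v,F)/k + 1) − (2/k)·e_G(S,F)`. -/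
theorem stmt_2 {V : Type*} [Fintype V] (G F : SimpleGraph V)
    (hFG : F ≤ G) (hFa : F.IsAcyclic) (k : ℕ) (hk : 0 < k)
    (hG : EdgeConnected k G) (hGF : EdgeConnected k (contractComponents G F))
    (S : Finset V) (hS : S.Nonempty) :
    (numComponents (delExcept G F (↑S)) : ℝ) ≤
      ∑ v ∈ S, ((degSep G F v : ℝ) / k + 1) - (2 / (k : ℝ)) * edgesInSep G F (↑S) := by
  classical
  haveI : DecidableEq V := Classical.decEq V
  set H := delExcept G F (↑S) with hHdef
  set H' := contractComponents G F with hH'def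
  have hFH : F ≤ H := fun x y h => show (delExcept G F ↑S).Adj x y from ⟨hFG h, Or.inl h⟩
  let φ : F.ConnectedComponent → H.ConnectedComponent :=
    SimpleGraph.ConnectedComponent.map (SimpleGraph.Hom.ofLE hFH)
  have hφ : ∀ x : V, φ (F.connectedComponentMk x) = H.connectedComponentMk x := by
    intro x; simp [φ, SimpleGraph.ConnectedComponent.map_mk]
  -- `Free c` : component `c` of `H` contains no vertex of `S`
  let Free : H.ConnectedComponent → Prop := fun c => ∀ v ∈ S, H.connectedComponentMk v ≠ c
  haveI : Fintype H.ConnectedComponent := Fintype.ofFinite _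
  haveI : Fintype F.ConnectedComponent := Fintype.ofFinite _
  -- the out-edge incidence finset
  let Ifin : Finset (V × V) := Finset.univ.filter
    (fun p => p.1 ∈ S ∧ p.2 ∉ S ∧ G.Adj p.1 p.2 ∧ ¬ F.Reachable p.1 p.2)
  -- Step A : numComponents = touching + free
  have stepA : numComponents H =
      {c : H.ConnectedComponent | Free c}ᶜ.ncard + {c : H.ConnectedComponent | Free c}.ncard := by
    rw [numComponents, ← Set.ncard_add_ncard_compl {c : H.ConnectedComponent | Free c}]
    omega
  -- Step B : touching components ≤ S.card
  have stepB : {c : H.ConnectedComponent | Free c}ᶜ.ncard ≤ S.card := by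
    have := Set.ncard_le_ncard_of_injOn
      (s := {c : H.ConnectedComponent | Free c}ᶜ) (t := (↑S : Set V))
      (fun c => if h : ∃ v ∈ S, H.connectedComponentMk v = c then h.choose else hS.choose)
      ?_ ?_ (Set.toFinite _)
    · simpa using this
    · intro c hc
      simp only [Set.mem_compl_iff, Set.mem_setOf_eq, Free] at hc
      push_neg at hc
      beta_reduce
      rw [dif_pos hc]
      exact hc.choose_spec.1
    · intro c1 h1 c2 h2 heq
      simp only [Set.mem_compl_iff, Set.mem_setOf_eq, Free] at h1 h2
      push_neg at h1 h2
      beta_reduce at heq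
      rw [dif_pos h1, dif_pos h2] at heq
      rw [← h1.choose_spec.2, ← h2.choose_spec.2, heq]
  -- Step C : k * (free components) ≤ Ifin.card
  have stepC : k * {c : H.ConnectedComponent | Free c}.ncard ≤ Ifin.card := by
    -- for each free component, at least k out-edges in its fiber
    have key : ∀ c : H.ConnectedComponent, Free c →
        k ≤ (Ifin.filter (fun p => H.connectedComponentMk p.2 = c)).card := by
      intro c hc
      -- boundary edges of the fiber of c in H'
      set B : Set (Sym2 F.ConnectedComponent) :=
        {e ∈ H'.edgeSet | ∃ a b, e = s(a, b) ∧ φ a = c ∧ φ b ≠ c} with hBdef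
      have hBk : k ≤ B.ncard := by
        by_contra hlt
        push_neg at hlt
        have hconn := hGF B hlt
        obtain ⟨v0, hv0⟩ := c.exists_rep
        have hv0 : H.connectedComponentMk v0 = c := hv0
        obtain ⟨s0, hs0⟩ := hS
        have ha0' : F.connectedComponentMk v0 ∈ {a | φ a = c} := by
          simp only [Set.mem_setOf_eq, hφ, hv0]
        have hb0 : F.connectedComponentMk s0 ∉ {a | φ a = c} := by
          simp only [Set.mem_setOf_eq, hφ]
          exact hc s0 hs0
        obtain ⟨w⟩ := hconn (F.connectedComponentMk v0) (F.connectedComponentMk s0)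
        obtain ⟨d, _, hdf, hds⟩ := w.exists_boundary_dart {a | φ a = c} ha0' hb0
        have hadj := d.adj
        rw [SimpleGraph.deleteEdges_adj] at hadj
        exact hadj.2 ⟨(SimpleGraph.mem_edgeSet _).mpr hadj.1, d.fst, d.snd, rfl, hdf, hds⟩
      -- injection from B into the fiber
      have hinj : B.ncard ≤ ((Ifin.filter (fun p => H.connectedComponentMk p.2 = c) : Finset (V × V)) : Set (V × V)).ncard := by
        have hex : ∀ e ∈ B, ∃ p : V × V,
            (p ∈ Ifin.filter (fun p => H.connectedComponentMk p.2 = c)) ∧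
            e = s(F.connectedComponentMk p.1, F.connectedComponentMk p.2) := by
          intro e he
          obtain ⟨heE, a, b, hab, hfa, hfb⟩ := he
          have hadj : (contractComponents G F).Adj a b := by rw [hab] at heE; exact heE
          obtain ⟨hne, x, y, hxy, hxa, hyb⟩ := hadj
          subst hxa; subst hyb
          have hxc : H.connectedComponentMk x = c := by rw [← hφ x]; exact hfa
          have hyc : H.connectedComponentMk y ≠ c := by rw [← hφ y]; exact hfb
          have hxS : x ∉ S := fun hxS => hc x hxS hxc
          have hnr : ¬ F.Reachable x y := fun hr =>
            hne (SimpleGraph.ConnectedComponent.sound hr)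
          have hyS : y ∈ S := by
            by_contra hyS
            have : H.Adj x y := ⟨hxy, Or.inr ⟨by simpa using hxS, by simpa using hyS⟩⟩
            exact hyc (hxc ▸ (SimpleGraph.ConnectedComponent.sound this.reachable).symm)
          refine ⟨(y, x), ?_, ?_⟩
          · simp only [Ifin, Finset.mem_filter, Finset.mem_univ, true_and]
            exact ⟨⟨hyS, hxS, hxy.symm, fun hr => hnr hr.symm⟩, hxc⟩
          · rw [hab]; exact Sym2.eq_swap
        refine Set.ncard_le_ncard_of_injOn
          (fun e => if h : ∃ p : V × V,
            (p ∈ Ifin.filter (fun p => H.connectedComponentMk p.2 = c)) ∧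
            e = s(F.connectedComponentMk p.1, F.connectedComponentMk p.2)
            then h.choose else (hS.choose, hS.choose)) ?_ ?_ (Set.toFinite _)
        · intro e he
          beta_reduce
          rw [dif_pos (hex e he)]
          exact (hex e he).choose_spec.1
        · intro e1 h1 e2 h2 heq
          beta_reduce at heq
          rw [dif_pos (hex e1 h1), dif_pos (hex e2 h2)] at heq
          rw [(hex e1 h1).choose_spec.2, (hex e2 h2).choose_spec.2, heq]
      rw [Set.ncard_coe_finset] at hinj
      exact hBk.trans hinj
    -- sum the fibers
    have hfib : Ifin.card = ∑ c : H.ConnectedComponent,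
        (Ifin.filter (fun p => H.connectedComponentMk p.2 = c)).card :=
      Finset.card_eq_sum_card_fiberwise (fun p _ => Finset.mem_univ _)
    have : k * {c : H.ConnectedComponent | Free c}.ncard =
        ∑ c ∈ Finset.univ.filter Free, k := by
      rw [Finset.sum_const, smul_eq_mul, mul_comm]
      congr 1
      rw [Set.ncard_eq_toFinset_card']
      congr 1
      ext c; simp
    rw [this, hfib]
    calc ∑ c ∈ Finset.univ.filter Free, k
        ≤ ∑ c ∈ Finset.univ.filter Free,
            (Ifin.filter (fun p => H.connectedComponentMk p.2 = c)).card :=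
          Finset.sum_le_sum (fun c hc => key c (Finset.mem_filter.mp hc).2)
      _ ≤ ∑ c : H.ConnectedComponent,
            (Ifin.filter (fun p => H.connectedComponentMk p.2 = c)).card :=
          Finset.sum_le_sum_of_subset (Finset.filter_subset _ _)
  -- Step D : handshake
  let G' : SimpleGraph V :=
    { Adj := fun v w => v ∈ S ∧ w ∈ S ∧ G.Adj v w ∧ ¬ F.Reachable v w
      symm := ⟨by rintro v w ⟨h1, h2, h3, h4⟩; exact ⟨h2, h1, h3.symm, fun h => h4 h.symm⟩⟩
      loopless := ⟨fun v h => G.irrefl h.2.2.1⟩ }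
  haveI : DecidableRel G'.Adj := Classical.decRel _
  let inner : V → ℕ := fun v => (Finset.univ.filter
    (fun w => w ∈ S ∧ G.Adj v w ∧ ¬ F.Reachable v w)).card
  let outer : V → ℕ := fun v => (Finset.univ.filter
    (fun w => w ∉ S ∧ G.Adj v w ∧ ¬ F.Reachable v w)).card
  have hsplit : ∀ v ∈ S, degSep G F v = inner v + outer v := by
    intro v _
    have h1 : degSep G F v =
        (Finset.univ.filter (fun w => G.Adj v w ∧ ¬ F.Reachable v w)).card := by
      rw [degSep, Set.ncard_eq_toFinset_card']
      congr 1
      ext w; simp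
    rw [h1]
    have h2 := Finset.card_filter_add_card_filter_not
      (s := Finset.univ.filter (fun w => G.Adj v w ∧ ¬ F.Reachable v w))
      (p := fun w => w ∈ S)
    rw [Finset.filter_filter, Finset.filter_filter] at h2
    beta_reduce at h2
    have e1 : (Finset.univ.filter (fun w => w ∈ S ∧ G.Adj v w ∧ ¬ F.Reachable v w)) =
        (Finset.univ.filter (fun w => (G.Adj v w ∧ ¬ F.Reachable v w) ∧ w ∈ S)) := by
      ext w; simp; tauto
    have e2 : (Finset.univ.filter (fun w => w ∉ S ∧ G.Adj v w ∧ ¬ F.Reachable v w)) =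
        (Finset.univ.filter (fun w => (G.Adj v w ∧ ¬ F.Reachable v w) ∧ ¬ w ∈ S)) := by
      ext w; simp; tauto
    have i1 : inner v = (Finset.univ.filter
        (fun w => (G.Adj v w ∧ ¬ F.Reachable v w) ∧ w ∈ S)).card := congrArg Finset.card e1
    have i2 : outer v = (Finset.univ.filter
        (fun w => (G.Adj v w ∧ ¬ F.Reachable v w) ∧ ¬ w ∈ S)).card := congrArg Finset.card e2
    omega
  have hinner : ∑ v ∈ S, inner v = 2 * edgesInSep G F (↑S) := by
    have hdeg : ∀ v ∈ S, inner v = G'.degree v := by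
      intro v hv
      have hnb : Finset.univ.filter (fun w => w ∈ S ∧ G.Adj v w ∧ ¬ F.Reachable v w) =
          G'.neighborFinset v := by
        ext w
        simp only [Finset.mem_filter, Finset.mem_univ, true_and,
          SimpleGraph.mem_neighborFinset]
        constructor
        · rintro ⟨h1, h2, h3⟩; exact ⟨hv, h1, h2, h3⟩
        · rintro ⟨_, h1, h2, h3⟩; exact ⟨h1, h2, h3⟩
      exact congrArg Finset.card hnb
    have hzero : ∀ v ∈ (Finset.univ : Finset V), v ∉ S → G'.degree v = 0 := by
      intro v _ hv
      have hnb : G'.neighborFinset v = ∅ := by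
        ext w
        simp only [SimpleGraph.mem_neighborFinset, Finset.notMem_empty, iff_false]
        rintro ⟨h1, _, _, _⟩; exact hv h1
      change (G'.neighborFinset v).card = 0
      rw [hnb]
      rfl
    have hsum : ∑ v ∈ S, G'.degree v = ∑ v : V, G'.degree v :=
      Finset.sum_subset (Finset.subset_univ S) hzero
    have hedges : edgesInSep G F (↑S) = G'.edgeFinset.card := by
      have hset : {e : Sym2 V | ∃ x y, e = s(x, y) ∧ G.Adj x y ∧ x ∈ (↑S : Set V) ∧
          y ∈ (↑S : Set V) ∧ ¬ F.Reachable x y} = G'.edgeSet := by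
        ext e
        refine Sym2.ind (fun x y => ?_) e
        simp only [Set.mem_setOf_eq, SimpleGraph.mem_edgeSet]
        constructor
        · rintro ⟨x', y', heq, h1, h2, h3, h4⟩
          rw [Sym2.eq_iff] at heq
          rcases heq with ⟨hx, hy⟩ | ⟨hx, hy⟩
          · subst hx; subst hy; exact ⟨h2, h3, h1, h4⟩
          · subst hx; subst hy; exact ⟨h3, h2, h1.symm, fun h => h4 h.symm⟩
        · rintro ⟨h1, h2, h3, h4⟩
          exact ⟨x, y, rfl, h3, h1, h2, h4⟩
      rw [edgesInSep, hset, Set.ncard_eq_toFinset_card']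
      congr 1
    rw [Finset.sum_congr rfl hdeg, hsum, SimpleGraph.sum_degrees_eq_twice_card_edges, hedges]
  have houter : ∑ v ∈ S, outer v = Ifin.card := by
    have hfib : Ifin.card = ∑ v ∈ S, (Ifin.filter (fun p => p.1 = v)).card :=
      Finset.card_eq_sum_card_fiberwise
        (fun p hp => (Finset.mem_filter.mp (Finset.mem_coe.mp hp)).2.1)
    rw [hfib]
    refine Finset.sum_congr rfl (fun v hv => ?_)
    refine (Finset.card_bij' (fun p _ => p.2) (fun w _ => (v, w)) ?_ ?_ ?_ ?_).symm
    · intro p hp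
      simp only [Ifin, Finset.mem_filter, Finset.mem_univ, true_and] at hp
      simp only [Finset.mem_filter, Finset.mem_univ, true_and]
      obtain ⟨⟨_, h2, h3, h4⟩, h5⟩ := hp
      subst h5
      exact ⟨h2, h3, h4⟩
    · intro w hw
      simp only [Finset.mem_filter, Finset.mem_univ, true_and] at hw
      exact Finset.mem_filter.mpr ⟨Finset.mem_filter.mpr
        ⟨Finset.mem_univ _, hv, hw.1, hw.2.1, hw.2.2⟩, rfl⟩
    · rintro ⟨p1, p2⟩ hp
      simp only [Ifin, Finset.mem_filter] at hp
      rcases hp with ⟨-, rfl⟩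
      rfl
    · intro w _
      rfl
  have stepD : ∑ v ∈ S, degSep G F v = 2 * edgesInSep G F (↑S) + Ifin.card := by
    rw [Finset.sum_congr rfl hsplit, Finset.sum_add_distrib, hinner, houter]
  -- final arithmetic
  have hk' : (0:ℝ) < k := by exact_mod_cast hk
  have hsumR : ∑ v ∈ S, ((degSep G F v : ℝ) / k + 1) =
      ((∑ v ∈ S, degSep G F v : ℕ) : ℝ) / k + S.card := by
    rw [Finset.sum_add_distrib, Finset.sum_const, ← Finset.sum_div]
    push_cast
    ring
  rw [hsumR, stepD]
  have hn : (numComponents H : ℝ) =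
      ({c : H.ConnectedComponent | Free c}ᶜ.ncard : ℝ) +
      ({c : H.ConnectedComponent | Free c}.ncard : ℝ) := by exact_mod_cast stepA
  have hB' : (({c : H.ConnectedComponent | Free c}ᶜ.ncard : ℕ) : ℝ) ≤ S.card := by
    exact_mod_cast stepB
  have hC' : (k:ℝ) * ({c : H.ConnectedComponent | Free c}.ncard : ℝ) ≤ Ifin.card := by
    exact_mod_cast stepC
  have hcf : (({c : H.ConnectedComponent | Free c}.ncard : ℕ) : ℝ) ≤ Ifin.card / k := by
    rw [le_div_iff₀ hk']
    calc ({c : H.ConnectedComponent | Free c}.ncard : ℝ) * k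
        = k * ({c : H.ConnectedComponent | Free c}.ncard : ℝ) := mul_comm _ _
      _ ≤ Ifin.card := hC'
  push_cast
  have hexp : (2 * (edgesInSep G F (↑S) : ℝ) + Ifin.card) / k + S.card -
      2 / k * edgesInSep G F (↑S) = S.card + Ifin.card / k := by
    field_simp
    ring
  rw [hexp]
  linarith
end

section
/- Let G be a graph with an m-tree-connected spanning subgraph H, let M be a nonempty subset of E(H), and let e′ ∈ E(G) \ E(H) be an edge joining two different m-tree-connected components of H \ M. Then there exists an edge e ∈ M such that H − e + e′ is still m-tree-connected. -/
open SimpleGraph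

variable {V : Type*}

namespace TC7

variable {V : Type*}




/-- A set of valid (non-diagonal) edges. -/
def Good (S : Set (Sym2 V)) : Prop := ∀ e ∈ S, ¬ e.IsDiag

lemma Good.mono {S T : Set (Sym2 V)} (h : T ⊆ S) (hS : Good S) : Good T :=
  fun e he => hS e (h he)

lemma Good.ne {S : Set (Sym2 V)} (hS : Good S) {x y : V} (h : s(x,y) ∈ S) : x ≠ y := by
  intro hxy; exact hS _ h (by simp [hxy])

lemma edgeSet_fromEdgeSet_of_good {S : Set (Sym2 V)} (hS : Good S) :
    (fromEdgeSet S).edgeSet = S := by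
  rw [SimpleGraph.edgeSet_fromEdgeSet]
  ext e; simp only [Set.mem_diff, Set.mem_setOf_eq, and_iff_left_iff_imp]
  exact fun he => hS e he

lemma adj_fromEdgeSet_of_good {S : Set (Sym2 V)} (hS : Good S) {x y : V}
    (h : s(x,y) ∈ S) : (fromEdgeSet S).Adj x y :=
  (SimpleGraph.fromEdgeSet_adj S).2 ⟨h, hS.ne h⟩

lemma acyclic_mono {S T : Set (Sym2 V)} (h : T ⊆ S)
    (hS : (fromEdgeSet S).IsAcyclic) : (fromEdgeSet T).IsAcyclic := by
  intro v c hc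
  have hsub : ∀ e ∈ c.edges, e ∈ (fromEdgeSet S).edgeSet := by
    intro e he
    have := c.edges_subset_edgeSet he
    rw [SimpleGraph.edgeSet_fromEdgeSet] at this ⊢
    exact ⟨h this.1, this.2⟩
  exact hS (c.transfer _ hsub) (hc.transfer hsub)

/-- Adding an edge between two non-reachable vertices keeps a graph acyclic. -/
lemma acyclic_insert_of_not_reachable {S : Set (Sym2 V)}
    (hac : (fromEdgeSet S).IsAcyclic) {x y : V} (hxy : x ≠ y)
    (hnr : ¬ (fromEdgeSet S).Reachable x y) :
    (fromEdgeSet (insert s(x,y) S)).IsAcyclic := by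
  intro v c hc
  by_cases hmem : s(x,y) ∈ c.edges
  · obtain ⟨hadj, hreach⟩ :=
      (SimpleGraph.adj_and_reachable_delete_edges_iff_exists_cycle).2 ⟨v, c, hc, hmem⟩
    apply hnr
    refine hreach.mono ?_
    intro a b hab
    rcases hab with ⟨hab1, hab2⟩
    rw [SimpleGraph.fromEdgeSet_adj] at hab1 ⊢
    rcases hab1 with ⟨hab1, hne⟩
    rcases Set.mem_insert_iff.1 hab1 with h1 | h1
    · exfalso; exact hab2 ((SimpleGraph.fromEdgeSet_adj _).2 ⟨by simp [h1], hne⟩)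
    · exact ⟨h1, hne⟩
  · apply hac (c.transfer _ ?hsub) (hc.transfer _)
    case hsub =>
      intro e he
      have := c.edges_subset_edgeSet he
      rw [SimpleGraph.edgeSet_fromEdgeSet] at this ⊢
      refine ⟨?_, this.2⟩
      rcases Set.mem_insert_iff.1 this.1 with h1 | h1
      · exact absurd (h1 ▸ he) hmem
      · exact h1

/-- A graph with an edge whose endpoints remain reachable after its deletion is not acyclic. -/
lemma not_acyclic_of_adj_of_reach {G : SimpleGraph V} {x y : V} (h1 : G.Adj x y)
    (h2 : (G \ fromEdgeSet {s(x,y)}).Reachable x y) : ¬ G.IsAcyclic := by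
  obtain ⟨w, p, hc, -⟩ := (SimpleGraph.adj_and_reachable_delete_edges_iff_exists_cycle).1 ⟨h1, h2⟩
  exact fun ha => ha p hc

lemma sdiff_single_le {S : Set (Sym2 V)} {g : Sym2 V} :
    (fromEdgeSet S \ fromEdgeSet {g}) ≤ fromEdgeSet (S \ {g}) := by
  intro a b hab
  rcases hab with ⟨hab1, hab2⟩
  rw [SimpleGraph.fromEdgeSet_adj] at hab1 ⊢
  rcases hab1 with ⟨hab1, hne⟩
  refine ⟨⟨hab1, ?_⟩, hne⟩
  intro hg
  exact hab2 ((SimpleGraph.fromEdgeSet_adj _).2 ⟨by simpa using hg.symm ▸ rfl, hne⟩)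


/-- Forest exchange: removing an edge of the `x`–`y` path after adding the edge `xy`
keeps the graph acyclic.-/
lemma exchange_acyclic {S : Set (Sym2 V)}
    (hac : (fromEdgeSet S).IsAcyclic) {x y : V} (hxy : x ≠ y) (hnot : s(x,y) ∉ S)
    {p : (fromEdgeSet S).Walk x y} (hp : p.IsPath) {g : Sym2 V} (hgp : g ∈ p.edges) :
    (fromEdgeSet (insert s(x,y) S \ {g})).IsAcyclic := by
  classical
  have hgS : g ∈ S := by
    have := p.edges_subset_edgeSet hgp
    rw [SimpleGraph.edgeSet_fromEdgeSet] at this; exact this.1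
  have hgne : g ≠ s(x,y) := fun h => hnot (h ▸ hgS)
  intro v c hc
  by_cases hmem : s(x,y) ∈ c.edges
  · obtain ⟨hadj, hreach⟩ :=
      (SimpleGraph.adj_and_reachable_delete_edges_iff_exists_cycle).2 ⟨v, c, hc, hmem⟩
    -- from the reachability, build a path in `fromEdgeSet S` from x to y avoiding g
    have hreach2 : (fromEdgeSet (S \ {g})).Reachable x y := by
      refine hreach.mono ?_
      intro a b hab
      rcases hab with ⟨hab1, hab2⟩
      rw [SimpleGraph.fromEdgeSet_adj] at hab1 ⊢
      rcases hab1 with ⟨hab1, hne⟩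
      have habe : s(a,b) ≠ s(x,y) := by
        intro h
        exact hab2 ((SimpleGraph.fromEdgeSet_adj _).2 ⟨by simp [h], hne⟩)
      rcases Set.mem_insert_iff.1 hab1.1 with h1 | h1
      · exact absurd h1 habe
      · exact ⟨⟨h1, hab1.2⟩, hne⟩
    obtain ⟨q⟩ := hreach2
    have hq : ∀ e ∈ (q.toPath : (fromEdgeSet (S \ {g})).Walk x y).edges,
        e ∈ (fromEdgeSet S).edgeSet := by
      intro e he
      have := (q.toPath : (fromEdgeSet (S \ {g})).Walk x y).edges_subset_edgeSet he
      rw [SimpleGraph.edgeSet_fromEdgeSet] at this ⊢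
      exact ⟨this.1.1, this.2⟩
    have hq' : ((q.toPath : (fromEdgeSet (S \ {g})).Walk x y).transfer _ hq).IsPath :=
      (q.toPath.2).transfer hq
    have huniq := SimpleGraph.isAcyclic_iff_path_unique.1 hac
      ⟨p, hp⟩ ⟨(q.toPath : (fromEdgeSet (S \ {g})).Walk x y).transfer _ hq, hq'⟩
    -- g is on p but not on the transferred path
    have hgq : g ∉ ((q.toPath : (fromEdgeSet (S \ {g})).Walk x y).transfer _ hq).edges := by
      rw [SimpleGraph.Walk.edges_transfer]
      intro hin
      have := (q.toPath : (fromEdgeSet (S \ {g})).Walk x y).edges_subset_edgeSet hin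
      rw [SimpleGraph.edgeSet_fromEdgeSet] at this
      exact this.1.2 rfl
    apply hgq
    have : (⟨p, hp⟩ : (fromEdgeSet S).Path x y).1.edges =
        ((q.toPath : (fromEdgeSet (S \ {g})).Walk x y).transfer _ hq).edges := by
      rw [huniq]
    exact this ▸ hgp
  · apply hac (c.transfer _ ?hsub) (hc.transfer _)
    case hsub =>
      intro e he
      have := c.edges_subset_edgeSet he
      rw [SimpleGraph.edgeSet_fromEdgeSet] at this ⊢
      refine ⟨?_, this.2⟩
      rcases Set.mem_insert_iff.1 this.1.1 with h1 | h1
      · exact absurd (h1 ▸ he) hmem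
      · exact h1

/-- In a forest, any edge of any path between the endpoints of a missing edge must be
on *the* path; more precisely, if inserting `xy` and deleting `g` is acyclic is needed;
here: if the result of inserting `xy` and deleting `g` is acyclic, -- placeholder -/
lemma mem_path_edges_of_exchange {S : Set (Sym2 V)}
    {x y : V} (hxy : x ≠ y) (hnot : s(x,y) ∉ S)
    {p : (fromEdgeSet S).Walk x y} {g : Sym2 V} (hgS : g ∈ S)
    (hac' : (fromEdgeSet (insert s(x,y) S \ {g})).IsAcyclic) :
    g ∈ p.edges := by
  by_contra hgp
  have hgne : s(x,y) ≠ g := fun h => hnot (h ▸ hgS)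
  apply not_acyclic_of_adj_of_reach (x := x) (y := y) ?hadj ?hreach hac'
  case hadj =>
    rw [SimpleGraph.fromEdgeSet_adj]
    exact ⟨⟨Set.mem_insert _ _, by simpa using hgne⟩, hxy⟩
  case hreach =>
    refine ⟨p.transfer _ ?_⟩
    intro e he
    have hme := p.edges_subset_edgeSet he
    rw [SimpleGraph.edgeSet_fromEdgeSet] at hme
    have heg : e ≠ g := fun h => hgp (h ▸ he)
    have hexy : e ≠ s(x,y) := fun h => hnot (h ▸ hme.1)
    rw [SimpleGraph.edgeSet_sdiff, SimpleGraph.edgeSet_fromEdgeSet,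
      SimpleGraph.edgeSet_fromEdgeSet]
    refine ⟨⟨⟨Set.mem_insert_of_mem _ hme.1, heg⟩, hme.2⟩, ?_⟩
    rintro ⟨h1, -⟩
    exact hexy (by simpa using h1)

lemma reachable_rewire {S T : Set (Sym2 V)}
    (hrep : ∀ a b : V, s(a,b) ∈ S → a ≠ b → (fromEdgeSet T).Reachable a b)
    {x y : V} (h : (fromEdgeSet S).Reachable x y) : (fromEdgeSet T).Reachable x y := by
  obtain ⟨p⟩ := h
  induction p with
  | nil => exact Reachable.refl _
  | cons hadj q ih =>
      obtain ⟨h1, h2⟩ := (SimpleGraph.fromEdgeSet_adj S).1 hadj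
      exact (hrep _ _ h1 h2).trans ih

def IsForest (S : Set (Sym2 V)) : Prop := Good S ∧ (fromEdgeSet S).IsAcyclic

lemma IsForest.mono {S T : Set (Sym2 V)} (h : T ⊆ S) (hS : IsForest S) : IsForest T :=
  ⟨hS.1.mono h, acyclic_mono h hS.2⟩

lemma forest_card_le {B : Set (Sym2 V)} (hBg : Good B) (hBfin : B.Finite)
    (hBac : (fromEdgeSet B).IsAcyclic) :
    ∀ n (A : Set (Sym2 V)), (B \ A).ncard = n → IsForest A → A.Finite →
      (∀ x y : V, s(x,y) ∈ B → (fromEdgeSet A).Reachable x y) → B.ncard ≤ A.ncard := by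
  classical
  intro n
  induction n using Nat.strong_induction_on with
  | _ n ih =>
    intro A hn hA hAfin hreach
    by_cases hBA : B \ A = ∅
    · exact Set.ncard_le_ncard (fun e he => by
        by_contra he'
        exact (Set.eq_empty_iff_forall_notMem.1 hBA e) ⟨he, he'⟩) hAfin
    · obtain ⟨b, hb⟩ := Set.nonempty_iff_ne_empty.2 hBA
      induction b using Sym2.ind with
      | _ x y =>
        have hxy : x ≠ y := hBg.ne hb.1
        have hxyA : s(x,y) ∉ A := hb.2
        have hre : (fromEdgeSet A).Reachable x y := hreach x y hb.1
        obtain ⟨w⟩ := hre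
        set p : (fromEdgeSet A).Walk x y := (w.toPath : (fromEdgeSet A).Walk x y) with hp_def
        have hp : p.IsPath := w.toPath.2
        have hpA : ∀ e ∈ p.edges, e ∈ A := by
          intro e he
          have := p.edges_subset_edgeSet he
          rw [SimpleGraph.edgeSet_fromEdgeSet] at this
          exact this.1
        have hex : ∃ a ∈ p.edges, a ∉ B := by
          by_contra hno
          push_neg at hno
          apply not_acyclic_of_adj_of_reach (G := fromEdgeSet B) (x := x) (y := y)
            ?_ ?_ hBac
          · rw [SimpleGraph.fromEdgeSet_adj]; exact ⟨hb.1, hxy⟩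
          · refine ⟨p.transfer _ ?_⟩
            intro e he
            have heB := hno e he
            have heA := hpA e he
            rw [SimpleGraph.edgeSet_sdiff, SimpleGraph.edgeSet_fromEdgeSet,
              SimpleGraph.edgeSet_fromEdgeSet]
            refine ⟨⟨heB, hBg e heB⟩, ?_⟩
            rintro ⟨h1, -⟩
            exact hxyA ((Set.mem_singleton_iff.1 h1) ▸ heA)
        obtain ⟨a₀, ha₀p, ha₀B⟩ := hex
        have ha₀A : a₀ ∈ A := hpA _ ha₀p
        have ha₀ne : a₀ ≠ s(x,y) := fun h => hxyA (h ▸ ha₀A)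
        set A' : Set (Sym2 V) := insert s(x,y) A \ {a₀} with hA'_def
        have hA'forest : IsForest A' := by
          constructor
          · intro e he
            rcases Set.mem_insert_iff.1 he.1 with h1 | h1
            · subst h1; simpa using hxy
            · exact hA.1 e h1
          · exact exchange_acyclic hA.2 hxy hxyA hp ha₀p
        have hA'fin : A'.Finite := ((hAfin.insert _).diff)
        have hA'card : A'.ncard = A.ncard := by
          rw [hA'_def, Set.ncard_diff_singleton_of_mem
              (Set.mem_insert_of_mem _ ha₀A),
            Set.ncard_insert_of_notMem hxyA hAfin]
          omega
        -- endpoints of a₀ are reachable in A'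
        have ha₀reach : ∀ c d : V, s(c,d) = a₀ → (fromEdgeSet A').Reachable c d := by
          intro c d hcd
          have hcdA : s(c,d) ∈ A := hcd ▸ ha₀A
          have hcdne : c ≠ d := hA.1.ne hcdA
          have hadjyx : (fromEdgeSet (insert s(x,y) A)).Adj y x := by
            rw [SimpleGraph.fromEdgeSet_adj]
            exact ⟨by rw [Sym2.eq_swap]; exact Set.mem_insert _ _, hxy.symm⟩
          have hpup : ∀ e ∈ p.edges, e ∈ (fromEdgeSet (insert s(x,y) A)).edgeSet := by
            intro e he
            rw [SimpleGraph.edgeSet_fromEdgeSet]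
            exact ⟨Set.mem_insert_of_mem _ (hpA e he),
              (fromEdgeSet A).not_isDiag_of_mem_edgeSet (p.edges_subset_edgeSet he)⟩
          set p' := p.transfer _ hpup with hp'_def
          have hp'path : p'.IsPath := hp.transfer _
          have hxyp' : s(y,x) ∉ p'.edges := by
            rw [hp'_def, SimpleGraph.Walk.edges_transfer]
            intro hmem
            exact hxyA (by rw [Sym2.eq_swap] at hmem; exact hpA _ hmem)
          have hcyc : (SimpleGraph.Walk.cons hadjyx
              (⟨p', hp'path⟩ : (fromEdgeSet (insert s(x,y) A)).Path x y).val).IsCycle :=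
            SimpleGraph.Path.cons_isCycle _ hadjyx hxyp'
          have hmem : s(c,d) ∈ (SimpleGraph.Walk.cons hadjyx p').edges := by
            rw [SimpleGraph.Walk.edges_cons, hp'_def, SimpleGraph.Walk.edges_transfer]
            exact List.mem_cons_of_mem _ (hcd ▸ ha₀p)
          obtain ⟨hadjcd, hreachcd⟩ :=
            (SimpleGraph.adj_and_reachable_delete_edges_iff_exists_cycle).2
              ⟨y, _, hcyc, hmem⟩
          refine (hreachcd.mono sdiff_single_le).mono (fromEdgeSet_mono ?_)
          intro e he
          rw [hA'_def]
          rw [hcd] at he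
          exact he
        -- the invariant is preserved
        have hreach' : ∀ x' y' : V, s(x',y') ∈ B → (fromEdgeSet A').Reachable x' y' := by
          intro x' y' hmem
          refine reachable_rewire ?_ (hreach x' y' hmem)
          intro a b habA habne
          by_cases hab : s(a,b) = a₀
          · exact ha₀reach a b hab
          · exact SimpleGraph.Adj.reachable ((SimpleGraph.fromEdgeSet_adj _).2
              ⟨⟨Set.mem_insert_of_mem _ habA, hab⟩, habne⟩)
        -- strictly smaller difference
        have hdiffeq : B \ A' = (B \ A) \ {s(x,y)} := by
          ext e
          simp only [hA'_def, Set.mem_diff, Set.mem_insert_iff, Set.mem_singleton_iff]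
          constructor
          · rintro ⟨heB, he2⟩
            push_neg at he2
            have hea : e ≠ a₀ := fun h => ha₀B (h ▸ heB)
            have hne : ¬(e = s(x,y) ∨ e ∈ A) := fun h => hea (he2 h)
            exact ⟨⟨heB, fun h => hne (Or.inr h)⟩, fun h => hne (Or.inl h)⟩
          · rintro ⟨⟨heB, heA⟩, hexy⟩
            refine ⟨heB, ?_⟩
            rintro ⟨h1 | h1, -⟩
            · exact hexy h1
            · exact heA h1
        have hlt : (B \ A').ncard < n := by
          rw [hdiffeq, ← hn]
          exact Set.ncard_diff_singleton_lt_of_mem hb (hBfin.diff)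
        have := ih _ hlt A' rfl hA'forest hA'fin hreach'
        omega

lemma graphic_aug {A B : Set (Sym2 V)} (hA : IsForest A) (hB : IsForest B)
    (hAfin : A.Finite) (hBfin : B.Finite) (hcard : A.ncard < B.ncard) :
    ∃ g ∈ B, g ∉ A ∧ IsForest (insert g A) := by
  by_contra hno
  push_neg at hno
  have hreach : ∀ x y : V, s(x,y) ∈ B → (fromEdgeSet A).Reachable x y := by
    intro x y hxyB
    by_cases hA' : s(x,y) ∈ A
    · exact (adj_fromEdgeSet_of_good hA.1 hA').reachable
    · have hne := hB.1.ne hxyB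
      by_contra hnr
      refine hno _ hxyB hA' ⟨?_, acyclic_insert_of_not_reachable hA.2 hne hnr⟩
      intro e he
      rcases Set.mem_insert_iff.1 he with h1 | h1
      · subst h1; simpa using hne
      · exact hA.1 e h1
  exact absurd (forest_card_le hB.1 hBfin hB.2 _ A rfl hA hAfin hreach) (by omega)

/-- Any forest has at most as many edges as a connected spanning forest. -/
lemma forest_card_le_tree {T F : Set (Sym2 V)} (hT : IsForest T) (hTfin : T.Finite)
    (hF : IsForest F) (hFfin : F.Finite) (hconn : (fromEdgeSet T).Preconnected) :
    F.ncard ≤ T.ncard :=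
  forest_card_le hF.1 hFfin hF.2 _ T rfl hT hTfin (fun x y _ => hconn x y)

/-- Independence in the `m`-fold union of the graphic matroid:
the edge set partitions into `m` forests. -/
def Indep (m : ℕ) (S : Set (Sym2 V)) : Prop :=
  ∃ F : Fin m → Set (Sym2 V), (∀ i, IsForest (F i)) ∧
    (∀ i j, i ≠ j → Disjoint (F i) (F j)) ∧ (⋃ i, F i) = S

lemma Indep.good {m : ℕ} {S : Set (Sym2 V)} (h : Indep m S) : Good S := by
  obtain ⟨F, hF, -, hU⟩ := h
  intro e he
  rw [← hU] at he
  obtain ⟨i, hi⟩ := Set.mem_iUnion.1 he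
  exact (hF i).1 e hi

lemma Indep.mono {m : ℕ} {S T : Set (Sym2 V)} (hT : T ⊆ S) (h : Indep m S) : Indep m T := by
  obtain ⟨F, hF, hd, hU⟩ := h
  refine ⟨fun i => F i ∩ T, fun i => (hF i).mono Set.inter_subset_left,
    fun i j hij => ((hd i j hij).mono Set.inter_subset_left Set.inter_subset_left), ?_⟩
  rw [← Set.iUnion_inter, hU, Set.inter_eq_right.2 hT]

lemma ncard_iUnion_fin {α : Type*} : ∀ {k : ℕ} (F : Fin k → Set α), (∀ i, (F i).Finite) →
    (∀ i j, i ≠ j → Disjoint (F i) (F j)) → (⋃ i, F i).ncard = ∑ i, (F i).ncard := by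
  intro k
  induction k with
  | zero => intro F _ _; simp
  | succ k ih =>
    intro F hfin hdisj
    have hsplit : (⋃ i, F i) = F 0 ∪ ⋃ i : Fin k, F i.succ := by
      ext e; simp only [Set.mem_iUnion, Set.mem_union]
      exact Fin.exists_fin_succ
    rw [hsplit, Set.ncard_union_eq ?hd (hfin 0) ?hf, ih (fun i => F i.succ)
        (fun i => hfin _) (fun i j hij => hdisj _ _ (by simpa using hij)), Fin.sum_univ_succ]
    case hd =>
      rw [Set.disjoint_iUnion_right]
      exact fun i => hdisj _ _ (Fin.succ_ne_zero i).symm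
    case hf =>
      exact Set.finite_iUnion (fun i => hfin _)

lemma Indep.ncard_eq_sum {m : ℕ} {S : Set (Sym2 V)} (hfin : S.Finite)
    {F : Fin m → Set (Sym2 V)} (hF : ∀ i, IsForest (F i))
    (hd : ∀ i j, i ≠ j → Disjoint (F i) (F j)) (hU : (⋃ i, F i) = S) :
    ∑ i, (F i).ncard = S.ncard := by
  rw [← hU, ncard_iUnion_fin F (fun i => hfin.subset (hU ▸ Set.subset_iUnion F i)) hd]

/-- Augmentation for the union matroid. -/
lemma indep_aug {m : ℕ} {A B : Set (Sym2 V)} (hAfin : A.Finite) (hBfin : B.Finite)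
    (hA : Indep m A) (hB : Indep m B) (hcard : A.ncard < B.ncard) :
    ∃ g ∈ B, g ∉ A ∧ Indep m (insert g A) := by
  classical
  set K : Set ℕ := {k | ∃ F G : Fin m → Set (Sym2 V),
    ((∀ i, IsForest (F i)) ∧ (∀ i j, i ≠ j → Disjoint (F i) (F j)) ∧ (⋃ i, F i) = A) ∧
    ((∀ i, IsForest (G i)) ∧ (∀ i j, i ≠ j → Disjoint (G i) (G j)) ∧ (⋃ i, G i) = B) ∧
    (∑ i, (F i ∩ G i).ncard) = k} with hK_def
  have hKne : K.Nonempty := by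
    obtain ⟨F, hF⟩ := hA; obtain ⟨G, hG⟩ := hB
    exact ⟨_, F, G, hF, hG, rfl⟩
  have hKbdd : BddAbove K := by
    refine ⟨m * A.ncard, ?_⟩
    rintro k ⟨F, G, hF, hG, rfl⟩
    calc (∑ i, (F i ∩ G i).ncard) ≤ ∑ _i : Fin m, A.ncard := by
          refine Finset.sum_le_sum fun i _ => Set.ncard_le_ncard ?_ hAfin
          exact fun e he => hF.2.2 ▸ Set.mem_iUnion.2 ⟨i, he.1⟩
      _ = m * A.ncard := by simp [Finset.sum_const, mul_comm]
  obtain ⟨F, G, hF, hG, hov⟩ := Nat.sSup_mem hKne hKbdd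
  have hFsub : ∀ i, F i ⊆ A := fun i => hF.2.2 ▸ Set.subset_iUnion F i
  have hGsub : ∀ i, G i ⊆ B := fun i => hG.2.2 ▸ Set.subset_iUnion G i
  have hFfin : ∀ i, (F i).Finite := fun i => hAfin.subset (hFsub i)
  have hGfin : ∀ i, (G i).Finite := fun i => hBfin.subset (hGsub i)
  have hex : ∃ i, (F i).ncard < (G i).ncard := by
    by_contra hno
    push_neg at hno
    have h1 := Indep.ncard_eq_sum hAfin hF.1 hF.2.1 hF.2.2
    have h2 := Indep.ncard_eq_sum hBfin hG.1 hG.2.1 hG.2.2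
    have : (∑ i, (G i).ncard) ≤ ∑ i, (F i).ncard :=
      Finset.sum_le_sum fun i _ => hno i
    omega
  obtain ⟨i, hi⟩ := hex
  obtain ⟨g, hgG, hgF, hgforest⟩ := graphic_aug (hF.1 i) (hG.1 i) (hFfin i) (hGfin i) hi
  by_cases hgA : g ∈ A
  · -- recolour g from class j to class i, increasing the overlap: contradiction
    exfalso
    have hgA' := hgA
    rw [← hF.2.2] at hgA'
    obtain ⟨j, hj⟩ := Set.mem_iUnion.1 hgA'
    have hij : j ≠ i := fun h => hgF (h ▸ hj)
    set F' : Fin m → Set (Sym2 V) :=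
      fun l => if l = i then insert g (F i) else if l = j then F j \ {g} else F l with hF'_def
    have hF'i : F' i = insert g (F i) := by simp [hF'_def]
    have hF'j : F' j = F j \ {g} := by simp [hF'_def, hij]
    have hF'other : ∀ l, l ≠ i → l ≠ j → F' l = F l := by
      intro l h1 h2; simp [hF'_def, h1, h2]
    have hsubF' : ∀ l, F' l ⊆ insert g (F l) := by
      intro l
      by_cases h1 : l = i
      · rw [h1, hF'i]
      · by_cases h2 : l = j
        · rw [h2, hF'j]
          exact Set.diff_subset.trans (Set.subset_insert _ _)
        · rw [hF'other l h1 h2]; exact Set.subset_insert _ _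
    have hgmem : ∀ l, g ∈ F' l → l = i := by
      intro l hl
      by_contra h1
      by_cases h2 : l = j
      · subst h2; rw [hF'j] at hl; exact hl.2 rfl
      · rw [hF'other l h1 h2] at hl
        exact h2 (by
          by_contra h3
          exact Set.disjoint_left.1 (hF.2.1 l j h3) hl hj)
    have hforest' : ∀ l, IsForest (F' l) := by
      intro l
      by_cases h1 : l = i
      · rw [h1, hF'i]; exact hgforest
      · by_cases h2 : l = j
        · rw [h2, hF'j]; exact IsForest.mono Set.diff_subset (hF.1 j)
        · rw [hF'other l h1 h2]; exact hF.1 l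
    have hdisj' : ∀ a b, a ≠ b → Disjoint (F' a) (F' b) := by
      intro a b hab
      rw [Set.disjoint_left]
      intro e hea heb
      by_cases heg : e = g
      · subst heg
        exact hab ((hgmem a hea).trans (hgmem b heb).symm)
      · have hea' : e ∈ F a := by
          rcases Set.mem_insert_iff.1 (hsubF' a hea) with h1 | h1
          · exact absurd h1 heg
          · exact h1
        have heb' : e ∈ F b := by
          rcases Set.mem_insert_iff.1 (hsubF' b heb) with h1 | h1
          · exact absurd h1 heg
          · exact h1
        exact Set.disjoint_left.1 (hF.2.1 a b hab) hea' heb'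
    have hunion' : (⋃ l, F' l) = A := by
      apply Set.Subset.antisymm
      · intro e he
        obtain ⟨l, hl⟩ := Set.mem_iUnion.1 he
        rcases Set.mem_insert_iff.1 (hsubF' l hl) with h1 | h1
        · exact h1 ▸ hgA
        · exact hFsub l h1
      · intro e he
        have he' := he
        rw [← hF.2.2] at he'
        obtain ⟨l, hl⟩ := Set.mem_iUnion.1 he'
        by_cases heg : e = g
        · subst heg
          exact Set.mem_iUnion.2 ⟨i, by rw [hF'i]; exact Set.mem_insert _ _⟩
        · by_cases h1 : l = i
          · rw [h1] at hl
            exact Set.mem_iUnion.2 ⟨i, by rw [hF'i]; exact Set.mem_insert_of_mem _ hl⟩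
          · by_cases h2 : l = j
            · rw [h2] at hl
              exact Set.mem_iUnion.2 ⟨j, by rw [hF'j]; exact ⟨hl, heg⟩⟩
            · exact Set.mem_iUnion.2 ⟨l, by rw [hF'other l h1 h2]; exact hl⟩
    -- the overlap increased by one
    have hgGj : g ∉ G j := Set.disjoint_left.1 (hG.2.1 i j (fun h => hij h.symm)) hgG
    have hterm : ∀ l, (F' l ∩ G l).ncard
        = (F l ∩ G l).ncard + (if l = i then 1 else 0) := by
      intro l
      by_cases h1 : l = i
      · rw [h1, hF'i, if_pos rfl, Set.insert_inter_of_mem hgG, Set.ncard_insert_of_notMem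
          (fun h => hgF h.1) ((hFfin _).inter_of_left _)]
      · rw [if_neg h1, add_zero]
        by_cases h2 : l = j
        · rw [h2, hF'j]
          congr 1
          ext e
          simp only [Set.mem_inter_iff, Set.mem_diff, Set.mem_singleton_iff]
          constructor
          · rintro ⟨⟨he1, -⟩, he2⟩; exact ⟨he1, he2⟩
          · rintro ⟨he1, he2⟩
            exact ⟨⟨he1, fun h => hgGj (h ▸ he2)⟩, he2⟩
        · rw [hF'other l h1 h2]
    have hsum : (∑ l, (F' l ∩ G l).ncard) = (∑ l, (F l ∩ G l).ncard) + 1 := by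
      rw [Finset.sum_congr rfl (fun l _ => hterm l), Finset.sum_add_distrib,
        Finset.sum_ite_eq' Finset.univ i (fun _ => 1)]
      simp
    have hmemK : (∑ l, (F l ∩ G l).ncard) + 1 ∈ K :=
      ⟨F', G, ⟨hforest', hdisj', hunion'⟩, hG, by rw [hsum]⟩
    have := le_csSup hKbdd hmemK
    omega
  · -- g can be added
    refine ⟨g, hGsub i hgG, hgA, ?_⟩
    set F' : Fin m → Set (Sym2 V) :=
      fun l => if l = i then insert g (F i) else F l with hF'_def
    have hF'i : F' i = insert g (F i) := by simp [hF'_def]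
    have hF'other : ∀ l, l ≠ i → F' l = F l := by intro l h1; simp [hF'_def, h1]
    have hsubF' : ∀ l, F' l ⊆ insert g (F l) := by
      intro l
      by_cases h1 : l = i
      · rw [h1, hF'i]
      · rw [hF'other l h1]; exact Set.subset_insert _ _
    have hgmem : ∀ l, g ∈ F' l → l = i := by
      intro l hl
      by_contra h1
      rw [hF'other l h1] at hl
      exact hgA (hFsub l hl)
    refine ⟨F', ?_, ?_, ?_⟩
    · intro l
      by_cases h1 : l = i
      · rw [h1, hF'i]; exact hgforest
      · rw [hF'other l h1]; exact hF.1 l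
    · intro a b hab
      rw [Set.disjoint_left]
      intro e hea heb
      by_cases heg : e = g
      · subst heg
        exact hab ((hgmem a hea).trans (hgmem b heb).symm)
      · have hea' : e ∈ F a := by
          rcases Set.mem_insert_iff.1 (hsubF' a hea) with h1 | h1
          · exact absurd h1 heg
          · exact h1
        have heb' : e ∈ F b := by
          rcases Set.mem_insert_iff.1 (hsubF' b heb) with h1 | h1
          · exact absurd h1 heg
          · exact h1
        exact Set.disjoint_left.1 (hF.2.1 a b hab) hea' heb'
    · apply Set.Subset.antisymm
      · intro e he
        obtain ⟨l, hl⟩ := Set.mem_iUnion.1 he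
        rcases Set.mem_insert_iff.1 (hsubF' l hl) with h1 | h1
        · exact h1 ▸ Set.mem_insert _ _
        · exact Set.mem_insert_of_mem _ (hFsub l h1)
      · intro e he
        rcases Set.mem_insert_iff.1 he with h1 | h1
        · exact Set.mem_iUnion.2 ⟨i, by rw [hF'i]; exact h1 ▸ Set.mem_insert _ _⟩
        · have he' := h1
          rw [← hF.2.2] at he'
          obtain ⟨l, hl⟩ := Set.mem_iUnion.1 he'
          by_cases h2 : l = i
          · rw [h2] at hl
            exact Set.mem_iUnion.2 ⟨i, by rw [hF'i]; exact Set.mem_insert_of_mem _ hl⟩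
          · exact Set.mem_iUnion.2 ⟨l, by rw [hF'other l h2]; exact hl⟩

lemma exists_maximal_indep {m : ℕ} {X I : Set (Sym2 V)} (hfin : X.Finite)
    (hI : Indep m I) (hIX : I ⊆ X) :
    ∃ Y, I ⊆ Y ∧ Y ⊆ X ∧ Indep m Y ∧ ∀ g ∈ X, g ∉ Y → ¬ Indep m (insert g Y) := by
  classical
  set K : Set ℕ := {k | ∃ Y, I ⊆ Y ∧ Y ⊆ X ∧ Indep m Y ∧ Y.ncard = k} with hK_def
  have hKne : K.Nonempty := ⟨I.ncard, I, Set.Subset.rfl, hIX, hI, rfl⟩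
  have hKbdd : BddAbove K := by
    refine ⟨X.ncard, ?_⟩
    rintro k ⟨Y, -, hYX, -, rfl⟩
    exact Set.ncard_le_ncard hYX hfin
  obtain ⟨Y, hIY, hYX, hYind, hYcard⟩ := Nat.sSup_mem hKne hKbdd
  refine ⟨Y, hIY, hYX, hYind, ?_⟩
  intro g hgX hgY hins
  have hmem : Y.ncard + 1 ∈ K := by
    refine ⟨insert g Y, hIY.trans (Set.subset_insert _ _), Set.insert_subset hgX hYX, hins, ?_⟩
    rw [Set.ncard_insert_of_notMem hgY (hfin.subset hYX)]
  have := le_csSup hKbdd hmem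
  omega

lemma maximal_indep_ncard_eq {m : ℕ} {X Y₁ Y₂ : Set (Sym2 V)} (hfin : X.Finite)
    (hY₁X : Y₁ ⊆ X) (hY₂X : Y₂ ⊆ X) (hI₁ : Indep m Y₁) (hI₂ : Indep m Y₂)
    (hmax₁ : ∀ g ∈ X, g ∉ Y₁ → ¬ Indep m (insert g Y₁))
    (hmax₂ : ∀ g ∈ X, g ∉ Y₂ → ¬ Indep m (insert g Y₂)) : Y₁.ncard = Y₂.ncard := by
  have key : ∀ (Z₁ Z₂ : Set (Sym2 V)), Z₁ ⊆ X → Z₂ ⊆ X → Indep m Z₁ → Indep m Z₂ →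
      (∀ g ∈ X, g ∉ Z₁ → ¬ Indep m (insert g Z₁)) → Z₁.ncard < Z₂.ncard → False := by
    intro Z₁ Z₂ hZ₁ hZ₂ hIZ₁ hIZ₂ hmax hlt
    obtain ⟨g, hgZ₂, hgZ₁, hins⟩ :=
      indep_aug (hfin.subset hZ₁) (hfin.subset hZ₂) hIZ₁ hIZ₂ hlt
    exact hmax g (hZ₂ hgZ₂) hgZ₁ hins
  rcases lt_trichotomy Y₁.ncard Y₂.ncard with h | h | h
  · exact absurd (key Y₁ Y₂ hY₁X hY₂X hI₁ hI₂ hmax₁ h) id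
  · exact h
  · exact absurd (key Y₂ Y₁ hY₂X hY₁X hI₂ hI₁ hmax₂ h) id

lemma exists_min_dep {m : ℕ} {X : Set (Sym2 V)} (hfin : X.Finite) (hdep : ¬ Indep m X) :
    ∃ C, C ⊆ X ∧ ¬ Indep m C ∧ ∀ g ∈ C, Indep m (C \ {g}) := by
  classical
  set K : Set ℕ := {k | ∃ C, C ⊆ X ∧ ¬ Indep m C ∧ C.ncard = k} with hK_def
  have hKne : K.Nonempty := ⟨X.ncard, X, Set.Subset.rfl, hdep, rfl⟩
  obtain ⟨C, hCX, hCdep, hCcard⟩ := Nat.sInf_mem hKne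
  refine ⟨C, hCX, hCdep, ?_⟩
  intro g hg
  by_contra hdep'
  have hmem : (C \ {g}).ncard ∈ K := ⟨C \ {g}, (Set.diff_subset).trans hCX, hdep', rfl⟩
  have hlt : (C \ {g}).ncard < C.ncard :=
    Set.ncard_diff_singleton_lt_of_mem hg (hfin.subset hCX)
  have := Nat.sInf_le hmem
  omega

/-- If `B₀` is independent, `B₀ + e'` is dependent with (a) fundamental circuit `C`,
then for any `d₀ ∈ C` other than `e'`, the exchange `B₀ + e' - d₀` is independent. -/
lemma base_exchange {m : ℕ} {B₀ : Set (Sym2 V)} {e' : Sym2 V}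
    (hfin : (insert e' B₀).Finite) (hB₀ : Indep m B₀) (he' : e' ∉ B₀)
    {C : Set (Sym2 V)} (hCX : C ⊆ insert e' B₀) (hCdep : ¬ Indep m C)
    (hCmin : ∀ g ∈ C, Indep m (C \ {g})) {d₀ : Sym2 V} (hd₀ : d₀ ∈ C) (hd₀e : d₀ ≠ e') :
    Indep m (insert e' B₀ \ {d₀}) := by
  classical
  by_contra hdep'
  obtain ⟨C', hC'sub, hC'dep, hC'min⟩ := exists_min_dep (hfin.diff) hdep'
  have he'C : e' ∈ C := by
    by_contra h
    exact hCdep (hB₀.mono (fun e he => ((hCX he).resolve_left (fun h' => h (h' ▸ he)))))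
  have he'C' : e' ∈ C' := by
    by_contra h
    exact hC'dep (hB₀.mono (fun e he =>
      (((hC'sub he).1).resolve_left (fun h' => h (h' ▸ he)))))
  have hd₀C' : d₀ ∉ C' := fun h => (hC'sub h).2 rfl
  set Z : Set (Sym2 V) := C ∪ C' with hZ_def
  have hZX : Z ⊆ insert e' B₀ := Set.union_subset hCX (hC'sub.trans Set.diff_subset)
  have hZfin : Z.Finite := hfin.subset hZX
  have hD'indep : Indep m (Z \ {e'}) := by
    refine hB₀.mono ?_
    rintro e ⟨heZ, hee'⟩
    rcases hZX heZ with h | h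
    · exact absurd h hee'
    · exact h
  have he'Z : e' ∈ Z := Or.inl he'C
  have hd₀Z : d₀ ∈ Z := Or.inl hd₀
  -- D' := Z \ {e'} is maximal independent in Z
  have hD'max : ∀ g ∈ Z, g ∉ Z \ {e'} → ¬ Indep m (insert g (Z \ {e'})) := by
    intro g hgZ hg hins
    have hge' : g = e' := by
      by_contra h
      exact hg ⟨hgZ, h⟩
    subst hge'
    refine hCdep (hins.mono ?_)
    intro e he
    by_cases h : e = g
    · exact h ▸ Set.mem_insert _ _
    · exact Set.mem_insert_of_mem _ ⟨Or.inl he, h⟩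
  -- a maximal independent subset of Z avoiding d₀ and containing C \ {d₀}
  obtain ⟨Y₀, hY₀sup, hY₀sub, hY₀indep, hY₀max⟩ :=
    exists_maximal_indep (hZfin.diff) (hCmin d₀ hd₀)
      (Set.diff_subset_diff_left Set.subset_union_left)
  have hY₀maxZ : ∀ g ∈ Z, g ∉ Y₀ → ¬ Indep m (insert g Y₀) := by
    intro g hgZ hgY hins
    by_cases hgd : g = d₀
    · subst hgd
      refine hCdep (hins.mono ?_)
      intro e he
      by_cases h : e = g
      · exact h ▸ Set.mem_insert _ _
      · exact Set.mem_insert_of_mem _ (hY₀sup ⟨he, h⟩)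
    · exact hY₀max g ⟨hgZ, hgd⟩ hgY hins
  -- equicardinality
  have hcards : Y₀.ncard = (Z \ {e'}).ncard :=
    maximal_indep_ncard_eq hZfin (hY₀sub.trans Set.diff_subset) Set.diff_subset
      hY₀indep hD'indep hY₀maxZ hD'max
  have h1 : (Z \ {e'}).ncard = Z.ncard - 1 := Set.ncard_diff_singleton_of_mem he'Z
  have h2 : (Z \ {d₀}).ncard = Z.ncard - 1 := Set.ncard_diff_singleton_of_mem hd₀Z
  have hle : (Z \ {d₀}).ncard ≤ Y₀.ncard := by omega
  have hY₀eq : Y₀ = Z \ {d₀} := Set.eq_of_subset_of_ncard_le hY₀sub hle (hZfin.diff)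
  refine hC'dep (hY₀indep.mono ?_)
  intro e he
  rw [hY₀eq]
  exact ⟨Or.inr he, fun h => hd₀C' (h ▸ he)⟩

section Machine

/-- A state of the exchange machine on the edge set `C`: a "hole" `d ∈ C` together
with a partition of `C \ {d}` into `m` forests. -/
structure MState (m : ℕ) (C : Set (Sym2 V)) : Type _ where
  hole : Sym2 V
  F : Fin m → Set (Sym2 V)
  hole_mem : hole ∈ C
  forest : ∀ i, IsForest (F i)
  disj : ∀ i j, i ≠ j → Disjoint (F i) (F j)
  union : (⋃ i, F i) = C \ {hole}

variable {m : ℕ} {C : Set (Sym2 V)}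

lemma MState.F_subset (σ : MState m C) (i : Fin m) : σ.F i ⊆ C \ {σ.hole} :=
  σ.union ▸ Set.subset_iUnion σ.F i

lemma MState.hole_not_mem (σ : MState m C) (i : Fin m) : σ.hole ∉ σ.F i :=
  fun h => (σ.F_subset i h).2 rfl

/-- One step of the machine: insert the hole into forest `i` and remove an edge `g`
of that forest (which becomes the new hole). -/
def MStep (σ σ' : MState m C) : Prop :=
  ∃ i : Fin m, σ'.hole ∈ σ.F i ∧ σ'.F i = insert σ.hole (σ.F i) \ {σ'.hole} ∧
    ∀ j, j ≠ i → σ'.F j = σ.F j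

lemma MStep.symm {σ σ' : MState m C} (h : MStep σ σ') : MStep σ' σ := by
  obtain ⟨i, hmem, heq, hother⟩ := h
  have hne : σ.hole ≠ σ'.hole := fun h => (σ.hole_not_mem i) (h ▸ hmem)
  refine ⟨i, ?_, ?_, fun j hj => (hother j hj).symm⟩
  · rw [heq]
    exact ⟨Set.mem_insert _ _, hne⟩
  · rw [heq]
    ext e
    simp only [Set.mem_insert_iff, Set.mem_diff, Set.mem_singleton_iff]
    constructor
    · intro he
      have h1 : e ≠ σ.hole := fun h => (σ.hole_not_mem i) (h ▸ he)
      by_cases h2 : e = σ'.hole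
      · exact ⟨Or.inl h2, h1⟩
      · exact ⟨Or.inr ⟨Or.inr he, h2⟩, h1⟩
    · rintro ⟨rfl | ⟨rfl | he, -⟩, hne'⟩
      · exact hmem
      · exact absurd rfl hne'
      · exact he

def MReach (σ₀ σ : MState m C) : Prop := Relation.ReflTransGen MStep σ₀ σ

/-- The set of edges which appear as a hole of some reachable state. -/
def holes (σ₀ : MState m C) : Set (Sym2 V) := {g | ∃ σ, MReach σ₀ σ ∧ σ.hole = g}

lemma hole_mem_holes {σ₀ σ : MState m C} (h : MReach σ₀ σ) : σ.hole ∈ holes σ₀ :=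
  ⟨σ, h, rfl⟩

/-- The hole's endpoints are connected in every forest of the state. -/
lemma hole_ends_reachable (hgood : Good C) (hdep : ¬ Indep m C) (σ : MState m C)
    {a b : V} (hab : s(a,b) = σ.hole) (i : Fin m) :
    (fromEdgeSet (σ.F i)).Reachable a b := by
  classical
  have habC : s(a,b) ∈ C := hab ▸ σ.hole_mem
  have hne : a ≠ b := hgood.ne habC
  by_contra hnr
  apply hdep
  refine ⟨Function.update σ.F i (insert σ.hole (σ.F i)), ?_, ?_, ?_⟩
  · intro j
    by_cases hj : j = i
    · rw [hj, Function.update_self]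
      constructor
      · intro e he
        rcases Set.mem_insert_iff.1 he with h1 | h1
        · exact h1 ▸ hgood _ σ.hole_mem
        · exact (σ.forest i).1 e h1
      · rw [← hab]
        exact acyclic_insert_of_not_reachable (σ.forest i).2 hne hnr
    · rw [Function.update_of_ne hj]
      exact σ.forest j
  · intro a' b' hab'
    by_cases ha' : a' = i
    · rw [ha', Function.update_self]
      have hb' : b' ≠ i := fun h => hab' (ha'.trans h.symm)
      rw [Function.update_of_ne hb']
      rw [Set.disjoint_left]
      intro e he heb
      rcases Set.mem_insert_iff.1 he with h1 | h1
      · exact σ.hole_not_mem b' (h1 ▸ heb)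
      · exact Set.disjoint_left.1 (σ.disj i b' (fun h => hab' (ha'.trans h))) h1 heb
    · rw [Function.update_of_ne ha']
      by_cases hb' : b' = i
      · rw [hb', Function.update_self]
        rw [Set.disjoint_left]
        intro e he heb
        rcases Set.mem_insert_iff.1 heb with h1 | h1
        · exact σ.hole_not_mem a' (h1 ▸ he)
        · exact Set.disjoint_left.1 (σ.disj a' i ha') he h1
      · rw [Function.update_of_ne hb']
        exact σ.disj a' b' hab'
  · ext e
    simp only [Set.mem_iUnion]
    constructor
    · rintro ⟨j, hj⟩
      by_cases hji : j = i
      · rw [hji, Function.update_self] at hj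
        rcases Set.mem_insert_iff.1 hj with h1 | h1
        · exact h1 ▸ σ.hole_mem
        · exact (σ.F_subset i h1).1
      · rw [Function.update_of_ne hji] at hj
        exact (σ.F_subset j hj).1
    · intro he
      by_cases heh : e = σ.hole
      · refine ⟨i, ?_⟩
        rw [Function.update_self, heh]
        exact Set.mem_insert _ _
      · have : e ∈ ⋃ j, σ.F j := σ.union ▸ (⟨he, heh⟩ : e ∈ C \ {σ.hole})
        obtain ⟨j, hj⟩ := Set.mem_iUnion.1 this
        by_cases hji : j = i
        · refine ⟨i, ?_⟩
          rw [Function.update_self]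
          exact Set.mem_insert_of_mem _ (hji ▸ hj)
        · refine ⟨j, ?_⟩
          rw [Function.update_of_ne hji]
          exact hj

/-- Any edge on a path between the hole's endpoints can be exchanged with the hole. -/
lemma step_exists (hgood : Good C) (σ : MState m C)
    {a b : V} (hab : s(a,b) = σ.hole) (i : Fin m)
    {p : (fromEdgeSet (σ.F i)).Walk a b} (hp : p.IsPath) {g : Sym2 V}
    (hg : g ∈ p.edges) : ∃ σ' : MState m C, MStep σ σ' ∧ σ'.hole = g := by
  classical
  have habC : s(a,b) ∈ C := hab ▸ σ.hole_mem
  have hne : a ≠ b := hgood.ne habC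
  have hgF : g ∈ σ.F i := by
    have := p.edges_subset_edgeSet hg
    rw [edgeSet_fromEdgeSet] at this
    exact this.1
  have hgC : g ∈ C := (σ.F_subset i hgF).1
  have hgh : g ≠ σ.hole := fun h => σ.hole_not_mem i (h ▸ hgF)
  have hholeF : σ.hole ∉ σ.F i := σ.hole_not_mem i
  have hforest' : IsForest (insert σ.hole (σ.F i) \ {g}) := by
    constructor
    · intro e he
      rcases Set.mem_insert_iff.1 he.1 with h1 | h1
      · exact h1 ▸ hgood _ σ.hole_mem
      · exact (σ.forest i).1 e h1
    · rw [← hab]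
      exact exchange_acyclic (σ.forest i).2 hne (hab ▸ hholeF) hp hg
  refine ⟨⟨g, Function.update σ.F i (insert σ.hole (σ.F i) \ {g}), hgC, ?_, ?_, ?_⟩,
    ⟨i, by simpa using hgF, by simp, fun j hj => by simp [Function.update_of_ne hj]⟩, rfl⟩
  · intro j
    by_cases hj : j = i
    · rw [hj, Function.update_self]; exact hforest'
    · rw [Function.update_of_ne hj]; exact σ.forest j
  · intro a' b' hab'
    have key : ∀ j, Function.update σ.F i (insert σ.hole (σ.F i) \ {g}) j ⊆
        insert σ.hole (σ.F j) := by
      intro j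
      by_cases hj : j = i
      · rw [hj, Function.update_self]
        exact Set.diff_subset
      · rw [Function.update_of_ne hj]
        exact Set.subset_insert _ _
    rw [Set.disjoint_left]
    intro e he heb
    by_cases heh : e = σ.hole
    · have honly : ∀ j, e ∈ Function.update σ.F i (insert σ.hole (σ.F i) \ {g}) j → j = i := by
        intro j hj
        by_contra hji
        rw [Function.update_of_ne hji] at hj
        exact σ.hole_not_mem j (heh ▸ hj)
      exact hab' ((honly a' he).trans (honly b' heb).symm)
    · have he' : e ∈ σ.F a' := by
        rcases Set.mem_insert_iff.1 (key a' he) with h1 | h1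
        · exact absurd h1 heh
        · exact h1
      have heb' : e ∈ σ.F b' := by
        rcases Set.mem_insert_iff.1 (key b' heb) with h1 | h1
        · exact absurd h1 heh
        · exact h1
      exact Set.disjoint_left.1 (σ.disj a' b' hab') he' heb'
  · ext e
    simp only [Set.mem_iUnion, Set.mem_diff, Set.mem_singleton_iff]
    constructor
    · rintro ⟨j, hj⟩
      by_cases hji : j = i
      · rw [hji, Function.update_self] at hj
        obtain ⟨hj1, hj2⟩ := hj
        rcases Set.mem_insert_iff.1 hj1 with h1 | h1
        · exact ⟨by rw [h1]; exact σ.hole_mem, fun h => hgh (by rw [← h]; exact h1)⟩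
        · exact ⟨(σ.F_subset i h1).1, hj2⟩
      · rw [Function.update_of_ne hji] at hj
        refine ⟨(σ.F_subset j hj).1, ?_⟩
        intro heg
        exact Set.disjoint_left.1 (σ.disj j i hji) hj (heg ▸ hgF)
    · rintro ⟨heC, heg⟩
      by_cases heh : e = σ.hole
      · refine ⟨i, ?_⟩
        rw [Function.update_self, heh]
        exact ⟨Set.mem_insert _ _, fun h => hgh (Set.mem_singleton_iff.1 h).symm⟩
      · have : e ∈ ⋃ j, σ.F j := σ.union ▸ (⟨heC, heh⟩ : e ∈ C \ {σ.hole})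
        obtain ⟨j, hj⟩ := Set.mem_iUnion.1 this
        by_cases hji : j = i
        · refine ⟨i, ?_⟩
          rw [Function.update_self]
          exact ⟨Set.mem_insert_of_mem _ (hji ▸ hj), heg⟩
        · refine ⟨j, ?_⟩
          rw [Function.update_of_ne hji]
          exact hj

end Machine

section Machine2
variable {m : ℕ} {C : Set (Sym2 V)}

/-- At any reachable state, there is a path between the hole's endpoints all of whose
edges are holes of reachable states. -/
lemma at_state_path (hgood : Good C) (hdep : ¬ Indep m C) {σ₀ σ : MState m C}
    (hσ : MReach σ₀ σ) {a b : V} (hab : s(a,b) = σ.hole) (i : Fin m) :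
    ∃ p : (fromEdgeSet (σ.F i)).Walk a b, p.IsPath ∧ ∀ g ∈ p.edges, g ∈ holes σ₀ := by
  classical
  obtain ⟨w⟩ := hole_ends_reachable hgood hdep σ hab i
  refine ⟨w.toPath, w.toPath.2, ?_⟩
  intro g hg
  obtain ⟨σ', hstep, hhole⟩ := step_exists hgood σ hab i w.toPath.2 hg
  exact hhole ▸ hole_mem_holes (hσ.tail hstep)

lemma at_state_prop (hgood : Good C) (hdep : ¬ Indep m C) {σ₀ σ : MState m C}
    (hσ : MReach σ₀ σ) {a b : V} (hab : s(a,b) = σ.hole) (i : Fin m) :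
    (fromEdgeSet (σ.F i ∩ holes σ₀)).Reachable a b := by
  obtain ⟨p, hp, hD⟩ := at_state_path hgood hdep hσ hab i
  refine ⟨p.transfer _ ?_⟩
  intro e he
  have h1 := p.edges_subset_edgeSet he
  rw [edgeSet_fromEdgeSet] at h1 ⊢
  exact ⟨⟨h1.1, hD e he⟩, h1.2⟩

/-- Pull reachability in a forest-with-holes back along one machine step. -/
lemma step_pull (hgood : Good C) (hdep : ¬ Indep m C) {σ₀ σ σ' : MState m C}
    (hσ : MReach σ₀ σ) (hstep : MStep σ σ') (i : Fin m) {x y : V}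
    (h : (fromEdgeSet (σ'.F i ∩ holes σ₀)).Reachable x y) :
    (fromEdgeSet (σ.F i ∩ holes σ₀)).Reachable x y := by
  obtain ⟨i₀, hmem, heq, hother⟩ := hstep
  by_cases hi : i = i₀
  · subst hi
    refine reachable_rewire ?_ h
    intro a b hab hne
    obtain ⟨hab1, hab2⟩ := hab
    rw [heq] at hab1
    by_cases habh : s(a,b) = σ.hole
    · exact at_state_prop hgood hdep hσ habh i
    · have : s(a,b) ∈ σ.F i := by
        rcases Set.mem_insert_iff.1 hab1.1 with h1 | h1
        · exact absurd h1 habh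
        · exact h1
      exact Adj.reachable (adj_fromEdgeSet_of_good
        (fun e he => hgood e ((σ.F_subset i he.1).1)) ⟨this, hab2⟩)
  · rw [hother i (fun h => hi h)] at h
    exact h

/-- The endpoints of every hole edge are connected in each forest of the initial state,
using only hole edges. -/
lemma holes_prop (hgood : Good C) (hdep : ¬ Indep m C) (σ₀ : MState m C) {d : Sym2 V}
    (hd : d ∈ holes σ₀) {a b : V} (hab : s(a,b) = d) (i : Fin m) :
    (fromEdgeSet (σ₀.F i ∩ holes σ₀)).Reachable a b := by
  obtain ⟨σ, hσ, rfl⟩ := hd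
  have key : ∀ (τ : MState m C), MReach σ₀ τ → ∀ x y : V,
      (fromEdgeSet (τ.F i ∩ holes σ₀)).Reachable x y →
      (fromEdgeSet (σ₀.F i ∩ holes σ₀)).Reachable x y := by
    intro τ hτ
    induction hτ with
    | refl => exact fun x y h => h
    | tail hpre hstep ih =>
        intro x y h
        exact ih _ _ (step_pull hgood hdep hpre hstep i h)
  exact key σ hσ a b (at_state_prop hgood hdep hσ hab i)

end Machine2

lemma reachable_induce_of_support {G : SimpleGraph V} {U : Set V} :
    ∀ {x y : V} (p : G.Walk x y) (hsup : ∀ z ∈ p.support, z ∈ U),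
    (G.induce U).Reachable ⟨x, hsup _ p.start_mem_support⟩ ⟨y, hsup _ p.end_mem_support⟩ := by
  intro x y p
  induction p with
  | nil => exact fun _ => Reachable.refl _
  | @cons a b c hadj q ih =>
      intro hsup
      have hb : b ∈ U := hsup b (by simp)
      have ha : a ∈ U := hsup a (by simp)
      refine Reachable.trans (Adj.reachable (?_ : (G.induce U).Adj ⟨a, ha⟩ ⟨b, hb⟩)) ?_
      · exact hadj
      · exact ih (fun z hz => hsup z (by simp [hz]))

lemma acyclic_induce {G : SimpleGraph V} (h : G.IsAcyclic) (U : Set V) :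
    (G.induce U).IsAcyclic := by
  intro w c hc
  exact h (c.map (SimpleGraph.Embedding.induce (G := G) U).toHom)
    ((SimpleGraph.Walk.map_isCycle_iff_of_injective
      (SimpleGraph.Embedding.induce (G := G) U).injective).2 hc)

lemma machine_main {m : ℕ} {C : Set (Sym2 V)} {u v : V} (hgood : Good C)
    (hdep : ¬ Indep m C) (hmin : ∀ g ∈ C, Indep m (C \ {g})) (huv : s(u,v) ∈ C) :
    sameTC m (fromEdgeSet (C \ {s(u,v)})) u v := by
  classical
  obtain ⟨F, hF, hFd, hFu⟩ := hmin _ huv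
  set σ₀ : MState m C := ⟨s(u,v), F, huv, hF, hFd, hFu⟩ with hσ₀_def
  set D := holes σ₀ with hD_def
  have huvD : s(u,v) ∈ D := ⟨σ₀, Relation.ReflTransGen.refl, rfl⟩
  have hDC : D ⊆ C := by
    rintro g ⟨σ, -, rfl⟩
    exact σ.hole_mem
  have hDgood : Good D := hgood.mono hDC
  set U : Set V := {x | (fromEdgeSet D).Reachable u x} with hU_def
  have huU : u ∈ U := Reachable.refl _
  have hvU : v ∈ U := Adj.reachable (adj_fromEdgeSet_of_good hDgood huvD)
  have hFC : ∀ i, σ₀.F i ∩ D ⊆ C \ {s(u,v)} := by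
    intro i e he
    exact σ₀.F_subset i he.1
  have hkey : ∀ (i : Fin m), ∀ x ∈ U, (fromEdgeSet (σ₀.F i ∩ D)).Reachable u x := by
    intro i x hx
    refine reachable_rewire ?_ hx
    intro a b habD hne
    exact holes_prop hgood hdep σ₀ habD rfl i
  have hsupU : ∀ (i : Fin m) {x y : V} (p : (fromEdgeSet (σ₀.F i ∩ D)).Walk x y),
      x ∈ U → ∀ z ∈ p.support, z ∈ U := by
    intro i x y p hx z hz
    have : (fromEdgeSet (σ₀.F i ∩ D)).Reachable x z := ⟨p.takeUntil z hz⟩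
    exact Reachable.trans hx (this.mono (fromEdgeSet_mono Set.inter_subset_right))
  refine ⟨U, huU, hvU, fun i => (fromEdgeSet (σ₀.F i ∩ D)).induce U, ?_, ?_, ?_⟩
  · intro i a b hab
    have : (fromEdgeSet (σ₀.F i ∩ D)).Adj ↑a ↑b := hab
    have h2 := (SimpleGraph.fromEdgeSet_adj _).1 this
    exact (SimpleGraph.fromEdgeSet_adj _).2 ⟨hFC i h2.1, h2.2⟩
  · intro i
    refine ⟨?_, ?_⟩
    · show (induce U (fromEdgeSet (σ₀.F i ∩ D))).Connected
      rw [connected_iff]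
      refine ⟨?_, ⟨⟨u, huU⟩⟩⟩
      intro x y
      have hx : (fromEdgeSet (σ₀.F i ∩ D)).Reachable u ↑x := hkey i ↑x x.2
      have hy : (fromEdgeSet (σ₀.F i ∩ D)).Reachable u ↑y := hkey i ↑y y.2
      obtain ⟨px⟩ := hx
      obtain ⟨py⟩ := hy
      have h1 := reachable_induce_of_support px (hsupU i px huU)
      have h2 := reachable_induce_of_support py (hsupU i py huU)
      exact (h1.symm.trans h2 :
          ((fromEdgeSet (σ₀.F i ∩ D)).induce U).Reachable _ _)
    · exact acyclic_induce (acyclic_mono Set.inter_subset_left (hF i).2) U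
  · intro i j hij
    rw [Set.disjoint_left]
    intro e hei hej
    induction e using Sym2.ind with
    | _ a b =>
      rw [SimpleGraph.mem_edgeSet] at hei hej
      have h1 : s((a : V), (b : V)) ∈ σ₀.F i ∩ D :=
        ((SimpleGraph.fromEdgeSet_adj _).1 hei).1
      have h2 : s((a : V), (b : V)) ∈ σ₀.F j ∩ D :=
        ((SimpleGraph.fromEdgeSet_adj _).1 hej).1
      exact Set.disjoint_left.1 (hFd i j hij) h1.1 h2.1

lemma sameTC_mono {m : ℕ} {G G' : SimpleGraph V} (h : G ≤ G') {u v : V}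
    (hs : sameTC m G u v) : sameTC m G' u v := by
  obtain ⟨W, hu, hv, T, hT, hT2, hT3⟩ := hs
  exact ⟨W, hu, hv, T, fun i a b hab => h (hT i hab), hT2, hT3⟩

lemma tree_ncard [Fintype V] {T : SimpleGraph V} (ht : T.IsTree) :
    T.edgeSet.ncard + 1 = Fintype.card V := by
  classical
  letI : Fintype ↑T.edgeSet := (T.edgeSet.toFinite).fintype
  have h1 := ht.card_edgeFinset
  have h2 : T.edgeSet.ncard = T.edgeFinset.card := Set.ncard_eq_toFinset_card' T.edgeSet
  omega

lemma forest_preconnected [Fintype V] {S T₀ : Set (Sym2 V)} (hS : IsForest S)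
    (hT₀ : IsForest T₀) (hT₀pre : (fromEdgeSet T₀).Preconnected)
    (hcard : T₀.ncard ≤ S.ncard) : (fromEdgeSet S).Preconnected := by
  intro x y
  by_cases hxy : x = y
  · exact hxy ▸ Reachable.refl _
  by_contra hnr
  have hxyS : s(x,y) ∉ S := by
    intro h
    exact hnr (Adj.reachable (adj_fromEdgeSet_of_good hS.1 h))
  have hins : IsForest (insert s(x,y) S) := by
    constructor
    · intro e he
      rcases Set.mem_insert_iff.1 he with h1 | h1
      · subst h1; simpa using hxy
      · exact hS.1 e h1
    · exact acyclic_insert_of_not_reachable hS.2 hxy hnr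
  have hle := forest_card_le_tree hT₀ (Set.toFinite _) hins (Set.toFinite _) hT₀pre
  rw [Set.ncard_insert_of_notMem hxyS (Set.toFinite _)] at hle
  omega

lemma indep_ncard_le {m : ℕ} {S T₀ : Set (Sym2 V)} (hfinS : S.Finite)
    (hT₀ : IsForest T₀) (hfinT₀ : T₀.Finite) (hT₀pre : (fromEdgeSet T₀).Preconnected)
    (hS : Indep m S) : S.ncard ≤ m * T₀.ncard := by
  obtain ⟨F, hF, hd, hU⟩ := hS
  have hsum := Indep.ncard_eq_sum hfinS hF hd hU
  have hle : ∀ i : Fin m, (F i).ncard ≤ T₀.ncard := fun i =>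
    forest_card_le_tree hT₀ hfinT₀ (hF i)
      (hfinS.subset (hU ▸ Set.subset_iUnion F i)) hT₀pre
  calc S.ncard = ∑ i, (F i).ncard := hsum.symm
    _ ≤ ∑ _i : Fin m, T₀.ncard := Finset.sum_le_sum (fun i _ => hle i)
    _ = m * T₀.ncard := by simp [Finset.sum_const, mul_comm]

end TC7

open TC7 in
/-- If `H ≤ G` is an `m`-tree-connected spanning subgraph, `M ⊆ E(H)` is
nonempty, and the edge `e' = uv ∈ E(G) \ E(H)` joins different `m`-tree-connected
components of `H \ M`, then there is `e ∈ M` with `H − e + e'` `m`-tree-connected. -/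
theorem stmt_7 {V : Type*} [Fintype V] (G H : SimpleGraph V) (m : ℕ) (hHG : H ≤ G)
    (hH : IsTreeConnected m H) (M : Set (Sym2 V)) (hM : M ⊆ H.edgeSet) (hMne : M.Nonempty)
    (u v : V) (he' : G.Adj u v) (he'H : ¬ H.Adj u v)
    (hsep : ¬ sameTC m (H.deleteEdges M) u v) :
    ∃ e ∈ M, IsTreeConnected m ((H.deleteEdges {e}) ⊔ SimpleGraph.fromEdgeSet {s(u, v)}) := by
  classical
  have huvne : u ≠ v := he'.ne
  rcases Nat.eq_zero_or_pos m with hm0 | hm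
  · subst hm0
    exact absurd ⟨{u, v}, by simp, by simp,
      fun i => i.elim0, fun i => i.elim0, fun i => i.elim0, fun i j _ => i.elim0⟩ hsep
  obtain ⟨T, hTle, hTtree, hTdisj⟩ := hH
  set n := Fintype.card V with hn_def
  set B₀ : Set (Sym2 V) := ⋃ i, (T i).edgeSet with hB₀_def
  have hB₀H : B₀ ⊆ H.edgeSet := by
    intro e he
    obtain ⟨i, hi⟩ := Set.mem_iUnion.1 he
    exact SimpleGraph.edgeSet_mono (hTle i) hi
  by_cases hMB : ∃ e ∈ M, e ∉ B₀
  · obtain ⟨e, heM, heB⟩ := hMB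
    refine ⟨e, heM, T, ?_, hTtree, hTdisj⟩
    intro i a b hab
    rw [SimpleGraph.sup_adj]
    left
    rw [SimpleGraph.deleteEdges_adj]
    refine ⟨hTle i hab, ?_⟩
    intro hcon
    apply heB
    rw [Set.mem_singleton_iff] at hcon
    rw [← hcon]
    exact Set.mem_iUnion.2 ⟨i, hab⟩
  · push_neg at hMB
    set i0 : Fin m := ⟨0, hm⟩ with hi0_def
    set T₀ : Set (Sym2 V) := (T i0).edgeSet with hT₀_def
    have hT₀forest : IsForest T₀ := by
      constructor
      · exact fun e he => (T i0).not_isDiag_of_mem_edgeSet he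
      · rw [hT₀_def, fromEdgeSet_edgeSet]
        exact (hTtree i0).2
    have hT₀pre : (fromEdgeSet T₀).Preconnected := by
      rw [hT₀_def, fromEdgeSet_edgeSet]
      exact (hTtree i0).1.preconnected
    have htc : ∀ i, (T i).edgeSet.ncard = n - 1 ∧ 1 ≤ n := by
      intro i
      have := tree_ncard (V := V) ⟨(hTtree i).1, (hTtree i).2⟩
      omega
    have hT₀card : T₀.ncard = n - 1 := (htc i0).1
    have hn1 : 1 ≤ n := (htc i0).2
    have hforests : ∀ i : Fin m, IsForest ((T i).edgeSet) := by
      intro i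
      constructor
      · exact fun e he => (T i).not_isDiag_of_mem_edgeSet he
      · rw [fromEdgeSet_edgeSet]
        exact (hTtree i).2
    have hB₀indep : Indep m B₀ :=
      ⟨fun i => (T i).edgeSet, hforests, hTdisj, rfl⟩
    have hB₀card : B₀.ncard = m * (n - 1) := by
      rw [hB₀_def, ncard_iUnion_fin _ (fun i => Set.toFinite _) hTdisj]
      rw [Finset.sum_congr rfl (fun i _ => (htc i).1)]
      simp [Finset.sum_const, mul_comm]
    have he'B₀ : s(u,v) ∉ B₀ := fun h => he'H ((SimpleGraph.mem_edgeSet H).1 (hB₀H h))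
    set X : Set (Sym2 V) := insert s(u,v) B₀ with hX_def
    have hXfin : X.Finite := Set.toFinite _
    have hXcard : X.ncard = m * (n - 1) + 1 := by
      rw [hX_def, Set.ncard_insert_of_notMem he'B₀ (Set.toFinite _), hB₀card]
    have hXgood : Good X := by
      intro e he
      rcases Set.mem_insert_iff.1 he with h1 | h1
      · subst h1; simpa using huvne
      · exact H.not_isDiag_of_mem_edgeSet (hB₀H h1)
    have hXdep : ¬ Indep m X := by
      intro h
      have := indep_ncard_le hXfin hT₀forest (Set.toFinite _) hT₀pre h
      rw [hT₀card] at this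
      omega
    obtain ⟨C, hCX, hCdep, hCmin⟩ := exists_min_dep hXfin hXdep
    have hCgood : Good C := hXgood.mono hCX
    have he'C : s(u,v) ∈ C := by
      by_contra h
      refine hCdep (hB₀indep.mono ?_)
      intro e he
      rcases Set.mem_insert_iff.1 (hCX he) with h1 | h1
      · exact absurd (h1 ▸ he) h
      · exact h1
    by_cases hCM : ∃ d₀ ∈ C, d₀ ∈ M
    · -- exchange branch
      obtain ⟨d₀, hd₀C, hd₀M⟩ := hCM
      have hd₀B₀ : d₀ ∈ B₀ := hMB d₀ hd₀M
      have hd₀e' : d₀ ≠ s(u,v) := fun h => he'B₀ (h ▸ hd₀B₀)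
      have hind := base_exchange hXfin hB₀indep he'B₀ hCX hCdep hCmin hd₀C hd₀e'
      obtain ⟨Fp, hFp, hFpd, hFpu⟩ := hind
      have hd₀X : d₀ ∈ X := hCX hd₀C
      have hXd₀card : (X \ {d₀}).ncard = m * (n - 1) := by
        rw [Set.ncard_diff_singleton_of_mem hd₀X, hXcard]
        omega
      have hFpsub : ∀ i, Fp i ⊆ X \ {d₀} := fun i => hFpu ▸ Set.subset_iUnion Fp i
      have hsum : ∑ i, (Fp i).ncard = m * (n - 1) := by
        rw [Indep.ncard_eq_sum (Set.toFinite _) hFp hFpd hFpu, hXd₀card]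
      have hub : ∀ i, (Fp i).ncard ≤ T₀.ncard := fun i =>
        forest_card_le_tree hT₀forest (Set.toFinite _) (hFp i) (Set.toFinite _) hT₀pre
      have hall : ∀ i, T₀.ncard ≤ (Fp i).ncard := by
        by_contra hno
        push_neg at hno
        obtain ⟨i1, hi1⟩ := hno
        have hlt : (∑ i, (Fp i).ncard) < ∑ _i : Fin m, T₀.ncard := by
          refine Finset.sum_lt_sum (fun i _ => hub i) ⟨i1, Finset.mem_univ _, hi1⟩
        rw [hsum, Finset.sum_const, Finset.card_univ, Fintype.card_fin, smul_eq_mul,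
          hT₀card] at hlt
        omega
      refine ⟨d₀, hd₀M, fun i => fromEdgeSet (Fp i), ?_, ?_, ?_⟩
      · intro i a b hab
        obtain ⟨hmem, hne⟩ := (SimpleGraph.fromEdgeSet_adj _).1 hab
        obtain ⟨hmemX, hmemd₀⟩ := hFpsub i hmem
        rw [SimpleGraph.sup_adj]
        rcases Set.mem_insert_iff.1 hmemX with h1 | h1
        · right
          exact (SimpleGraph.fromEdgeSet_adj _).2 ⟨by simp [h1], hne⟩
        · left
          rw [SimpleGraph.deleteEdges_adj]
          exact ⟨(SimpleGraph.mem_edgeSet H).1 (hB₀H h1), hmemd₀⟩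
      · intro i
        constructor
        · rw [connected_iff]
          exact ⟨forest_preconnected (hFp i) hT₀forest hT₀pre (hall i), ⟨u⟩⟩
        · exact (hFp i).2
      · intro i j hij
        rw [Set.disjoint_left]
        intro e hei hej
        rw [edgeSet_fromEdgeSet] at hei hej
        exact Set.disjoint_left.1 (hFpd i j hij) hei.1 hej.1
    · -- contradiction branch
      push_neg at hCM
      exfalso
      apply hsep
      have hmm := machine_main hCgood hCdep hCmin he'C
      refine sameTC_mono ?_ hmm
      intro a b hab
      obtain ⟨⟨habC, habne'⟩, hne⟩ := (SimpleGraph.fromEdgeSet_adj _).1 hab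
      have habB₀ : s(a,b) ∈ B₀ := by
        rcases Set.mem_insert_iff.1 (hCX habC) with h1 | h1
        · exact absurd h1 habne'
        · exact h1
      rw [SimpleGraph.deleteEdges_adj]
      exact ⟨(SimpleGraph.mem_edgeSet H).1 (hB₀H habB₀), hCM _ habC⟩
end

section
/- Let G be a graph, f a nonnegative integer-valued function on V(G), Q ⊆ V(G) with |Q| even, and suppose f(v) ≥ 1 for all v. If for all S ⊆ V(G), ω(G \ S) ≤ Σ_{v∈S}(f(v)−1) + 1, then G has a spanning forest F such that d_F(v) ≤ f(v) for every vertex v, and d_F(v) is odd if and only if v ∈ Q. -/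
open SimpleGraph

variable {V : Type*}

open SimpleGraph Finset

namespace StmtAux

open scoped Classical

variable {V : Type*}

/-- Reachability within a vertex set `W`. -/
def RW (G : SimpleGraph V) (W : Finset V) (u v : V) : Prop :=
  u ∈ W ∧ v ∈ W ∧ ∃ p : G.Walk u v, ∀ x ∈ p.support, x ∈ W

variable {G : SimpleGraph V}

lemma RW.refl {W : Finset V} {v : V} (h : v ∈ W) : RW G W v v :=
  ⟨h, h, SimpleGraph.Walk.nil, by simp [h]⟩

lemma RW.symm {W : Finset V} {u v : V} (h : RW G W u v) : RW G W v u := by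
  obtain ⟨hu, hv, p, hp⟩ := h
  exact ⟨hv, hu, p.reverse, by simpa using hp⟩

lemma RW.trans {W : Finset V} {u v w : V} (h : RW G W u v) (h' : RW G W v w) :
    RW G W u w := by
  obtain ⟨hu, hv, p, hp⟩ := h
  obtain ⟨hv', hw, q, hq⟩ := h'
  refine ⟨hu, hw, p.append q, ?_⟩
  intro x hx
  rw [SimpleGraph.Walk.support_append] at hx
  rcases List.mem_append.1 hx with hx | hx
  · exact hp x hx
  · exact hq x (List.mem_of_mem_tail hx)

lemma RW.mono {W W' : Finset V} (hWW : W ⊆ W') {u v : V} (h : RW G W u v) :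
    RW G W' u v := by
  obtain ⟨hu, hv, p, hp⟩ := h
  exact ⟨hWW hu, hWW hv, p, fun x hx => hWW (hp x hx)⟩

lemma RW.adj {W : Finset V} {u v : V} (h : G.Adj u v) (hu : u ∈ W) (hv : v ∈ W) :
    RW G W u v :=
  ⟨hu, hv, SimpleGraph.Walk.cons h SimpleGraph.Walk.nil, by
    intro x hx; simp at hx; rcases hx with rfl | rfl <;> assumption⟩

/-- The connected component of `v` inside `W`, as a `Finset`. -/
noncomputable def compSet (G : SimpleGraph V) (W : Finset V) (v : V) : Finset V :=
  W.filter (fun w => RW G W v w)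

lemma mem_compSet {W : Finset V} {v w : V} :
    w ∈ compSet G W v ↔ w ∈ W ∧ RW G W v w := by
  simp [compSet]

lemma self_mem_compSet {W : Finset V} {v : V} (h : v ∈ W) : v ∈ compSet G W v :=
  mem_compSet.2 ⟨h, RW.refl h⟩

lemma compSet_subset {W : Finset V} {v : V} : compSet G W v ⊆ W :=
  Finset.filter_subset _ _

lemma compSet_eq_of_rw {W : Finset V} {u v : V} (h : RW G W u v) :
    compSet G W u = compSet G W v := by
  ext w
  simp only [mem_compSet]
  exact ⟨fun ⟨hw, hr⟩ => ⟨hw, h.symm.trans hr⟩, fun ⟨hw, hr⟩ => ⟨hw, h.trans hr⟩⟩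

/-- The set of connected components of `W`. -/
noncomputable def comps (G : SimpleGraph V) (W : Finset V) : Finset (Finset V) :=
  W.image (fun v => compSet G W v)

lemma mem_comps {W : Finset V} {C : Finset V} :
    C ∈ comps G W ↔ ∃ v ∈ W, compSet G W v = C := by
  simp [comps]

lemma compSet_mem_comps {W : Finset V} {v : V} (h : v ∈ W) :
    compSet G W v ∈ comps G W :=
  mem_comps.2 ⟨v, h, rfl⟩

lemma comps_nonempty {W : Finset V} {C : Finset V} (h : C ∈ comps G W) :
    C.Nonempty := by
  obtain ⟨v, hv, rfl⟩ := mem_comps.1 h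
  exact ⟨v, self_mem_compSet hv⟩

lemma comps_subset {W : Finset V} {C : Finset V} (h : C ∈ comps G W) : C ⊆ W := by
  obtain ⟨v, hv, rfl⟩ := mem_comps.1 h
  exact compSet_subset

lemma compSet_eq_of_mem {W : Finset V} {C : Finset V} (h : C ∈ comps G W) {v : V}
    (hv : v ∈ C) : compSet G W v = C := by
  obtain ⟨u, hu, rfl⟩ := mem_comps.1 h
  exact (compSet_eq_of_rw (mem_compSet.1 hv).2).symm

lemma comps_eq_of_mem {W : Finset V} {C C' : Finset V} (h : C ∈ comps G W)
    (h' : C' ∈ comps G W) {v : V} (hv : v ∈ C) (hv' : v ∈ C') : C = C' := by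
  rw [← compSet_eq_of_mem h hv, ← compSet_eq_of_mem h' hv']

lemma comps_disjoint {W : Finset V} {C C' : Finset V} (h : C ∈ comps G W)
    (h' : C' ∈ comps G W) (hne : C ≠ C') : Disjoint C C' := by
  rw [Finset.disjoint_left]
  intro v hv hv'
  exact hne (comps_eq_of_mem h h' hv hv')

lemma comps_biUnion {W : Finset V} : (comps G W).biUnion id = W := by
  apply Finset.Subset.antisymm
  · intro x hx
    obtain ⟨C, hC, hxC⟩ := Finset.mem_biUnion.1 hx
    exact comps_subset hC hxC
  · intro x hx
    exact Finset.mem_biUnion.2 ⟨compSet G W x, compSet_mem_comps hx, self_mem_compSet hx⟩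

lemma comps_closed {W : Finset V} {C : Finset V} (h : C ∈ comps G W) {x y : V}
    (hx : x ∈ C) (hy : y ∈ W) (hadj : G.Adj x y) : y ∈ C := by
  obtain ⟨v, hv, rfl⟩ := mem_comps.1 h
  rcases mem_compSet.1 hx with ⟨hxW, hr⟩
  exact mem_compSet.2 ⟨hy, hr.trans (RW.adj hadj hxW hy)⟩

lemma walk_support_rw {W : Finset V} {u v : V} (p : G.Walk u v)
    (hp : ∀ x ∈ p.support, x ∈ W) : ∀ x ∈ p.support, RW G W u x := by
  induction p with
  | nil =>
    intro x hx; simp at hx; subst hx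
    exact RW.refl (hp _ (by simp))
  | cons h q ih =>
    intro x hx
    have hu : _ ∈ W := hp _ (SimpleGraph.Walk.start_mem_support _)
    have hb : _ ∈ W := hp _ (by simp [SimpleGraph.Walk.support_cons]; exact Or.inl rfl)
    rw [SimpleGraph.Walk.support_cons] at hx
    rcases List.mem_cons.1 hx with rfl | hx
    · exact RW.refl hu
    · have hq : ∀ y ∈ q.support, y ∈ W := by
        intro y hy; exact hp y (by rw [SimpleGraph.Walk.support_cons]; exact List.mem_cons_of_mem _ hy)
      have hb' : _ ∈ W := hq _ (SimpleGraph.Walk.start_mem_support _)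
      exact (RW.adj h hu hb').trans (ih hq x hx)

/-- Walks within `W` starting in a component stay in that component. -/
lemma rw_mem_comp {W : Finset V} {C : Finset V} (h : C ∈ comps G W) {u v : V}
    (hu : u ∈ C) (hr : RW G W u v) : v ∈ C := by
  rw [← compSet_eq_of_mem h hu, mem_compSet]
  exact ⟨hr.2.1, hr⟩

/-- A component is internally connected. -/
lemma compSet_self {W : Finset V} {C : Finset V} (h : C ∈ comps G W) {v : V}
    (hv : v ∈ C) : compSet G C v = C := by
  apply Finset.Subset.antisymm compSet_subset
  intro w hw
  have hr : RW G W v w := by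
    have h1 := (mem_compSet.1 ((compSet_eq_of_mem h hv) ▸ hv)).2
    have h2 := (mem_compSet.1 ((compSet_eq_of_mem h hv) ▸ hw)).2
    exact h1.symm.trans h2
  obtain ⟨hvW, hwW, p, hp⟩ := hr
  have hsup : ∀ x ∈ p.support, x ∈ C := by
    intro x hx
    exact rw_mem_comp h hv (walk_support_rw p hp x hx)
  exact mem_compSet.2 ⟨hw, ⟨hv, hw, p, hsup⟩⟩

lemma comps_self {W : Finset V} {C : Finset V} (h : C ∈ comps G W) :
    comps G C = {C} := by
  apply Finset.Subset.antisymm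
  · intro D hD
    obtain ⟨v, hv, rfl⟩ := mem_comps.1 hD
    simp [compSet_self h hv]
  · intro D hD
    simp at hD; subst hD
    obtain ⟨v, hv⟩ := comps_nonempty h
    exact mem_comps.2 ⟨v, hv, compSet_self h hv⟩

/-- Walks inside `A` starting in a set closed in `A` stay there. -/
lemma walk_stays {A C : Finset V} (hcl : ∀ x ∈ C, ∀ y ∈ A, G.Adj x y → y ∈ C)
    {u w : V} (q : G.Walk u w) (hu : u ∈ C) (hq : ∀ x ∈ q.support, x ∈ A) : w ∈ C := by
  induction q with
  | nil => exact hu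
  | cons hadj q ih =>
    have hb := hq _ (by
      rw [SimpleGraph.Walk.support_cons]
      exact List.mem_cons_of_mem _ (SimpleGraph.Walk.start_mem_support q))
    refine ih (hcl _ hu _ hb hadj) ?_
    intro x hx; apply hq; rw [SimpleGraph.Walk.support_cons]
    exact List.mem_cons_of_mem _ hx

/-- Criterion for being a component: nonempty, closed, internally connected. -/
lemma mem_comps_of_closed {A C : Finset V} (hsub : C ⊆ A) (hne : C.Nonempty)
    (hcl : ∀ x ∈ C, ∀ y ∈ A, G.Adj x y → y ∈ C)
    (hconn : ∀ x ∈ C, ∀ y ∈ C, RW G C x y) : C ∈ comps G A := by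
  obtain ⟨v, hv⟩ := hne
  refine mem_comps.2 ⟨v, hsub hv, ?_⟩
  apply Finset.Subset.antisymm
  · intro w hw
    obtain ⟨hwA, hrw⟩ := mem_compSet.1 hw
    obtain ⟨_, _, p, hp⟩ := hrw
    exact walk_stays hcl p hv hp
  · intro w hw
    exact mem_compSet.2 ⟨hsub hw, (hconn v hv w hw).mono hsub⟩

/-- Transfer: a component of `A` contained in `A' ⊆ A` is a component of `A'`. -/
lemma comps_anti {A A' C : Finset V} (h : C ∈ comps G A) (hA : A' ⊆ A)
    (hsub : C ⊆ A') : C ∈ comps G A' := by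
  refine mem_comps_of_closed hsub (comps_nonempty h) ?_ ?_
  · intro x hx y hy hadj
    exact comps_closed h hx (hA hy) hadj
  · intro x hx y hy
    have h1 := compSet_self h hx
    have : y ∈ compSet G C x := h1.symm ▸ hy
    exact (mem_compSet.1 this).2

/-- Transfer: a component of `A` that is closed in `A' ⊇ A` is a component of `A'`. -/
lemma comps_mono {A A' C : Finset V} (h : C ∈ comps G A) (hA : A ⊆ A')
    (hcl : ∀ x ∈ C, ∀ y ∈ A', G.Adj x y → y ∈ C) : C ∈ comps G A' := by
  refine mem_comps_of_closed ((comps_subset h).trans hA) (comps_nonempty h) hcl ?_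
  intro x hx y hy
  have h1 := compSet_self h hx
  have : y ∈ compSet G C x := h1.symm ▸ hy
  exact (mem_compSet.1 this).2

/-- If a family of components covers `A'`, it is all of `comps G A'`. -/
lemma comps_eq_of_cover {A' : Finset V} {P : Finset (Finset V)}
    (hP : ∀ C ∈ P, C ∈ comps G A') (hcov : ∀ v ∈ A', ∃ C ∈ P, v ∈ C) :
    comps G A' = P := by
  apply Finset.Subset.antisymm
  · intro C hC
    obtain ⟨v, hv⟩ := comps_nonempty hC
    obtain ⟨D, hD, hvD⟩ := hcov v (comps_subset hC hv)
    rwa [comps_eq_of_mem hC (hP D hD) hv hvD]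
  · intro C hC
    exact hP C hC

/-- Sum over components. -/
lemma sum_comps {W : Finset V} (g : V → ℕ) :
    ∑ C ∈ comps G W, ∑ x ∈ C, g x = ∑ x ∈ W, g x := by
  conv_rhs => rw [← comps_biUnion (G := G) (W := W)]
  rw [Finset.sum_biUnion]
  · rfl
  · intro C hC D hD hne
    exact comps_disjoint (by simpa using hC) (by simpa using hD) hne

/-- Number of components with odd `g`-sum. -/
noncomputable def oddc (G : SimpleGraph V) (g : V → ℕ) (A : Finset V) : ℕ :=
  ((comps G A).filter (fun C => Odd (∑ x ∈ C, g x))).card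

lemma oddc_parity {A : Finset V} (g : V → ℕ) :
    oddc G g A % 2 = (∑ x ∈ A, g x) % 2 := by
  rw [← sum_comps (G := G) (W := A) g, Finset.sum_nat_mod, oddc]
  rw [Finset.card_filter]
  rw [Finset.sum_nat_mod (comps G A) 2 (fun C => if Odd (∑ x ∈ C, g x) then 1 else 0)]
  congr 1
  apply Finset.sum_congr rfl
  intro C _
  by_cases h : Odd (∑ x ∈ C, g x)
  · simp [h, Nat.odd_iff.1 h]
  · simp [h, Nat.even_iff.1 (Nat.not_odd_iff_even.1 h)]

end StmtAux

namespace StmtAux2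
open SimpleGraph Finset StmtAux
open scoped Classical

variable {V : Type*} {G : SimpleGraph V}

lemma rw_of_induce_reachable {A : Finset V} {u v : ↥(A : Set V)}
    (h : (G.induce (A : Set V)).Reachable u v) : RW G A u.1 v.1 := by
  obtain ⟨p⟩ := h
  have hu : u.1 ∈ A := by exact_mod_cast u.2
  have hv : v.1 ∈ A := by exact_mod_cast v.2
  refine ⟨hu, hv, p.map (SimpleGraph.Embedding.induce (A : Set V)).toHom, ?_⟩
  intro x hx
  replace hx : x ∈ (p.map (SimpleGraph.Embedding.induce (A : Set V)).toHom).support := hx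
  rw [SimpleGraph.Walk.support_map] at hx
  obtain ⟨y, _, rfl⟩ := List.mem_map.1 hx
  exact_mod_cast y.2

lemma induce_reachable_of_walk {A : Finset V} {u v : V} (p : G.Walk u v)
    (hp : ∀ x ∈ p.support, x ∈ A) (hu : u ∈ (A : Set V)) (hv : v ∈ (A : Set V)) :
    (G.induce (A : Set V)).Reachable ⟨u, hu⟩ ⟨v, hv⟩ := by
  induction p with
  | nil =>
    exact Reachable.refl _
  | cons hadj q ih =>
    rename_i a b c
    have ha : a ∈ A := hp _ (SimpleGraph.Walk.start_mem_support _)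
    have hb : b ∈ A := by
      apply hp
      rw [SimpleGraph.Walk.support_cons]
      exact List.mem_cons_of_mem _ (SimpleGraph.Walk.start_mem_support q)
    have hq : ∀ x ∈ q.support, x ∈ A := by
      intro x hx; apply hp; rw [SimpleGraph.Walk.support_cons]
      exact List.mem_cons_of_mem _ hx
    have h1 : (G.induce (A : Set V)).Adj ⟨a, by exact_mod_cast ha⟩ ⟨b, by exact_mod_cast hb⟩ := by
      simp only [SimpleGraph.induce_eq_coe_induce_top, SimpleGraph.comap_adj,
        Function.Embedding.coe_subtype]
      exact ⟨by exact_mod_cast ha, by exact_mod_cast hb, hadj⟩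
    exact (h1.reachable).trans (ih hq (by exact_mod_cast hb) hv)

lemma induce_reachable_of_rw {A : Finset V} {u v : V} (h : RW G A u v) :
    (G.induce (A : Set V)).Reachable ⟨u, by exact_mod_cast h.1⟩ ⟨v, by exact_mod_cast h.2.1⟩ := by
  obtain ⟨hu, hv, p, hp⟩ := h
  exact induce_reachable_of_walk p hp _ _

lemma numComponents_eq_comps_card (G : SimpleGraph V) (A : Finset V) :
    numComponents (G.induce (A : Set V)) = (comps G A).card := by
  have hmem : ∀ v : ↥(A : Set V), v.1 ∈ A := fun v => by exact_mod_cast v.2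
  let fC : ↥(A : Set V) → {C // C ∈ comps G A} :=
    fun v => ⟨compSet G A v.1, compSet_mem_comps (hmem v)⟩
  have hwd : ∀ (v w : ↥(A : Set V)) (p : (G.induce (A : Set V)).Walk v w),
      p.IsPath → fC v = fC w := by
    intro v w p _
    have : RW G A v.1 w.1 := rw_of_induce_reachable ⟨p⟩
    simp only [fC, Subtype.mk_eq_mk]
    exact compSet_eq_of_rw this
  let Φ : (G.induce (A : Set V)).ConnectedComponent → {C // C ∈ comps G A} :=
    SimpleGraph.ConnectedComponent.lift fC hwd
  have hbij : Function.Bijective Φ := by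
    constructor
    · intro c c'
      obtain ⟨v, rfl⟩ := c.exists_rep
      obtain ⟨w, rfl⟩ := c'.exists_rep
      intro h
      have h2 : compSet G A v.1 = compSet G A w.1 := congrArg Subtype.val h
      have hvw : RW G A v.1 w.1 := by
        have h1 : v.1 ∈ compSet G A w.1 := h2 ▸ self_mem_compSet (hmem v)
        exact ((mem_compSet.1 h1).2).symm
      have := induce_reachable_of_rw (G := G) hvw
      exact SimpleGraph.ConnectedComponent.sound (by simpa using this)
    · rintro ⟨C, hC⟩
      obtain ⟨v, hv, rfl⟩ := mem_comps.1 hC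
      exact ⟨SimpleGraph.connectedComponentMk _ ⟨v, by exact_mod_cast hv⟩, rfl⟩
  have h1 : numComponents (G.induce (A : Set V)) = Nat.card {C // C ∈ comps G A} :=
    Nat.card_eq_of_bijective Φ hbij
  rw [h1, Nat.card_eq_fintype_card, Fintype.card_coe]

end StmtAux2

namespace StmtAux3
open SimpleGraph Finset StmtAux
open scoped Classical

variable {V : Type*}

/-- Symmetric difference of two graphs. -/
def sd (A B : SimpleGraph V) : SimpleGraph V := (A \ B) ⊔ (B \ A)

lemma sd_adj {A B : SimpleGraph V} {x y : V} :
    (sd A B).Adj x y ↔ (A.Adj x y ∧ ¬B.Adj x y) ∨ (B.Adj x y ∧ ¬A.Adj x y) := by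
  simp [sd]

lemma sd_le {A B H : SimpleGraph V} (hA : A ≤ H) (hB : B ≤ H) : sd A B ≤ H := by
  intro x y h
  rcases sd_adj.1 h with ⟨h1, _⟩ | ⟨h1, _⟩
  · exact hA h1
  · exact hB h1

lemma neighborSet_sd (A B : SimpleGraph V) (v : V) :
    (sd A B).neighborSet v =
      (A.neighborSet v \ B.neighborSet v) ∪ (B.neighborSet v \ A.neighborSet v) := by
  ext y
  simp only [SimpleGraph.mem_neighborSet, Set.mem_union, Set.mem_diff, sd_adj]

lemma odd_sub_iff {a c : ℕ} (h : c ≤ a) : (Odd (a - c) ↔ (Odd a ↔ ¬ Odd c)) := by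
  rw [Nat.odd_iff, Nat.odd_iff, Nat.odd_iff]
  omega

lemma deg_sd_parity [Fintype V] (A B : SimpleGraph V) (v : V) :
    Odd (deg (sd A B) v) ↔ (Odd (deg A v) ↔ ¬ Odd (deg B v)) := by
  classical
  set NA := A.neighborSet v with hNA
  set NB := B.neighborSet v with hNB
  have hfin : ∀ s : Set V, s.Finite := fun s => Set.toFinite s
  have h1 : deg (sd A B) v = (NA \ NB).ncard + (NB \ NA).ncard := by
    rw [deg, neighborSet_sd]
    exact Set.ncard_union_eq (disjoint_sdiff_sdiff) (hfin _) (hfin _)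
  have h2 : (NA \ NB).ncard = NA.ncard - (NA ∩ NB).ncard := by
    rw [← Set.diff_self_inter, Set.ncard_diff Set.inter_subset_left (hfin _)]
  have h3 : (NB \ NA).ncard = NB.ncard - (NA ∩ NB).ncard := by
    rw [← Set.diff_self_inter, Set.ncard_diff Set.inter_subset_left (hfin _),
      Set.inter_comm]
  have hc1 : (NA ∩ NB).ncard ≤ NA.ncard :=
    Set.ncard_le_ncard Set.inter_subset_left (hfin _)
  have hc2 : (NA ∩ NB).ncard ≤ NB.ncard :=
    Set.ncard_le_ncard Set.inter_subset_right (hfin _)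
  have eA : deg A v = NA.ncard := rfl
  have eB : deg B v = NB.ncard := rfl
  rw [h1, h2, h3, eA, eB, Nat.odd_iff, Nat.odd_iff, Nat.odd_iff]
  omega

/-- The single-edge graph. -/
def eg (x y : V) : SimpleGraph V := fromEdgeSet {s(x, y)}

lemma eg_adj {x y a b : V} (hxy : x ≠ y) :
    (eg x y).Adj a b ↔ (a = x ∧ b = y) ∨ (a = y ∧ b = x) := by
  simp only [eg, fromEdgeSet_adj, Set.mem_singleton_iff, Sym2.eq, Sym2.rel_iff',
    Prod.mk.injEq, Prod.swap_prod_mk]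
  constructor
  · rintro ⟨⟨h1, h2⟩ | ⟨h1, h2⟩, hne⟩
    · exact Or.inl ⟨h1, h2⟩
    · exact Or.inr ⟨h1, h2⟩
  · rintro (⟨rfl, rfl⟩ | ⟨rfl, rfl⟩)
    · exact ⟨Or.inl ⟨rfl, rfl⟩, hxy⟩
    · exact ⟨Or.inr ⟨rfl, rfl⟩, fun h => hxy h.symm⟩

lemma eg_le {H : SimpleGraph V} {x y : V} (h : H.Adj x y) : eg x y ≤ H := by
  intro a b hab
  rcases (eg_adj h.ne).1 hab with ⟨rfl, rfl⟩ | ⟨rfl, rfl⟩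
  · exact h
  · exact h.symm

lemma neighborSet_eg_left {x y : V} (hxy : x ≠ y) :
    (eg x y).neighborSet x = {y} := by
  ext b
  rw [SimpleGraph.mem_neighborSet, eg_adj hxy, Set.mem_singleton_iff]
  constructor
  · rintro (⟨-, rfl⟩ | ⟨hx, -⟩)
    · rfl
    · exact absurd hx hxy
  · rintro rfl; exact Or.inl ⟨rfl, rfl⟩

lemma neighborSet_eg_none {x y w : V} (hxy : x ≠ y) (hwx : w ≠ x) (hwy : w ≠ y) :
    (eg x y).neighborSet w = ∅ := by
  ext b
  rw [SimpleGraph.mem_neighborSet, eg_adj hxy]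
  simp only [Set.mem_empty_iff_false, iff_false]
  rintro (⟨hx, -⟩ | ⟨hy, -⟩)
  · exact hwx hx
  · exact hwy hy

lemma eg_comm (x y : V) : eg x y = eg y x := by
  unfold eg
  rw [Sym2.eq_swap]

lemma deg_eg [Fintype V] {x y : V} (hxy : x ≠ y) (w : V) :
    deg (eg x y) w = if w = x ∨ w = y then 1 else 0 := by
  rcases eq_or_ne w x with rfl | hwx
  · rw [if_pos (Or.inl rfl), deg, neighborSet_eg_left hxy, Set.ncard_singleton]
  · rcases eq_or_ne w y with rfl | hwy
    · rw [if_pos (Or.inr rfl), deg, eg_comm, neighborSet_eg_left (Ne.symm hxy),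
        Set.ncard_singleton]
    · rw [if_neg (by tauto), deg, neighborSet_eg_none hxy hwx hwy, Set.ncard_empty]

lemma odd_deg_eg [Fintype V] {x y : V} (hxy : x ≠ y) (w : V) :
    Odd (deg (eg x y) w) ↔ (w = x ∨ w = y) := by
  rw [deg_eg hxy]
  by_cases h : w = x ∨ w = y <;> simp [h]

/-- Lemma A: parity subgraph of a walk. -/
lemma walk_parity [Fintype V] {H : SimpleGraph V} {u v : V} (p : H.Walk u v) :
    ∃ A : SimpleGraph V, A ≤ H ∧ ∀ w, (Odd (deg A w) ↔ ((w = u) ↔ ¬(w = v))) := by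
  induction p with
  | nil =>
    refine ⟨⊥, bot_le, fun w => ?_⟩
    have hb : (⊥ : SimpleGraph V).neighborSet w = ∅ := by
      ext b; simp [SimpleGraph.mem_neighborSet]
    rw [deg, hb, Set.ncard_empty]
    simp
  | cons hadj q ih =>
    rename_i a b c
    obtain ⟨A', hA'le, hA'⟩ := ih
    refine ⟨sd A' (eg a b), sd_le hA'le (eg_le hadj), fun w => ?_⟩
    rw [deg_sd_parity, hA' w, odd_deg_eg hadj.ne w]
    have hab : ¬(w = a ∧ w = b) := by rintro ⟨rfl, rfl⟩; exact hadj.ne rfl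
    tauto

lemma deg_mono [Fintype V] {A B : SimpleGraph V} (h : A ≤ B) (v : V) :
    deg A v ≤ deg B v :=
  Set.ncard_le_ncard (fun y hy => h hy) (Set.toFinite _)

lemma deg_sdiff [Fintype V] {A B : SimpleGraph V} (h : A ≤ B) (v : V) :
    deg (B \ A) v = deg B v - deg A v := by
  have hN : (B \ A).neighborSet v = B.neighborSet v \ A.neighborSet v := by
    ext y; simp [SimpleGraph.mem_neighborSet]
  have hsub : A.neighborSet v ⊆ B.neighborSet v := fun y hy => h hy
  show ((B \ A).neighborSet v).ncard = _
  rw [hN, Set.ncard_diff hsub (Set.toFinite _)]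
  rfl

lemma odd_deg_sdiff [Fintype V] {A B : SimpleGraph V} (h : A ≤ B) (v : V) :
    Odd (deg (B \ A) v) ↔ (Odd (deg B v) ↔ ¬ Odd (deg A v)) := by
  rw [deg_sdiff h v]
  exact odd_sub_iff (deg_mono h v)

set_option maxHeartbeats 1000000 in
/-- Any degree-feasible parity subgraph can be replaced by an acyclic one. -/
lemma exists_acyclic [Fintype V] {G : SimpleGraph V} (f : V → ℕ) (Qp : V → Prop)
    (h0 : ∃ F : SimpleGraph V, F ≤ G ∧ ∀ v, deg F v ≤ f v ∧ (Odd (deg F v) ↔ Qp v)) :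
    ∃ F : SimpleGraph V, F ≤ G ∧ F.IsAcyclic ∧
      ∀ v, deg F v ≤ f v ∧ (Odd (deg F v) ↔ Qp v) := by
  classical
  set s : Set ℕ :=
    {n | ∃ F : SimpleGraph V, (F ≤ G ∧ ∀ v, deg F v ≤ f v ∧ (Odd (deg F v) ↔ Qp v)) ∧
      F.edgeSet.ncard = n} with hs
  have hsne : s.Nonempty := by
    obtain ⟨F, hF⟩ := h0
    exact ⟨F.edgeSet.ncard, F, hF, rfl⟩
  obtain ⟨F, hF, hFcard⟩ := Nat.sInf_mem hsne
  refine ⟨F, hF.1, ?_, hF.2⟩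
  rw [SimpleGraph.isAcyclic_iff_forall_adj_isBridge]
  intro x y hadj
  by_contra hbr
  rw [SimpleGraph.isBridge_iff] at hbr
  push_neg at hbr
  obtain ⟨p⟩ := hbr
  set F' := F \ fromEdgeSet {s(x, y)} with hF'
  have hegF : eg x y ≤ F := eg_le hadj
  have hF'eq : F' = F \ eg x y := rfl
  obtain ⟨A, hAle, hApar⟩ := walk_parity p
  have hAF : A ≤ F := hAle.trans (F.deleteEdges_le _)
  set F'' := F' \ A with hF''
  have hF''F : F'' ≤ F := by rw [hF'', hF'eq]; exact sdiff_le.trans sdiff_le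
  have hdegF'' : ∀ w, deg F'' w ≤ deg F w := fun w => deg_mono hF''F w
  have hparF'' : ∀ w, (Odd (deg F'' w) ↔ Odd (deg F w)) := by
    intro w
    have h1 : Odd (deg F' w) ↔ (Odd (deg F w) ↔ ¬ Odd (deg (eg x y) w)) := by
      rw [hF'eq]; exact odd_deg_sdiff hegF w
    have h2 : Odd (deg F'' w) ↔ (Odd (deg F' w) ↔ ¬ Odd (deg A w)) :=
      odd_deg_sdiff hAle w
    rw [h2, h1, hApar w, odd_deg_eg hadj.ne w]
    have hne : ¬(w = x ∧ w = y) := by rintro ⟨rfl, rfl⟩; exact hadj.ne rfl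
    tauto
  -- fewer edges
  have hxyF : s(x, y) ∈ F.edgeSet := hadj
  have hxyF'' : s(x, y) ∉ F''.edgeSet := by
    rw [SimpleGraph.mem_edgeSet]
    intro h
    have : F'.Adj x y := (sdiff_le : F' \ A ≤ F') h
    rw [hF'eq] at this
    exact ((sdiff_adj _ _ _ _).1 this).2 ((eg_adj hadj.ne).2 (Or.inl ⟨rfl, rfl⟩))
  have hsub : F''.edgeSet ⊆ F.edgeSet \ {s(x, y)} := by
    intro e he
    exact ⟨SimpleGraph.edgeSet_mono hF''F he, by rintro rfl; exact hxyF'' he⟩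
  have hlt : F''.edgeSet.ncard < F.edgeSet.ncard := by
    calc F''.edgeSet.ncard ≤ (F.edgeSet \ {s(x, y)}).ncard :=
          Set.ncard_le_ncard hsub (Set.toFinite _)
      _ < F.edgeSet.ncard := by
          rw [Set.ncard_diff_singleton_of_mem hxyF]
          have : 0 < F.edgeSet.ncard :=
            (Set.ncard_pos (Set.toFinite _)).2 ⟨_, hxyF⟩
          omega
  have : F''.edgeSet.ncard ∈ s := by
    refine ⟨F'', ⟨hF''F.trans hF.1, fun v => ?_⟩, rfl⟩
    exact ⟨(hdegF'' v).trans (hF.2 v).1, (hparF'' v).trans (hF.2 v).2⟩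
  have := Nat.sInf_le this
  omega

end StmtAux3

namespace StmtAux4
open SimpleGraph Finset StmtAux
open scoped Classical

variable {V : Type*}

lemma deg_bot (v : V) : deg (⊥ : SimpleGraph V) v = 0 := by
  have : (⊥ : SimpleGraph V).neighborSet v = ∅ := by
    ext b; simp [SimpleGraph.mem_neighborSet]
  rw [deg, this, Set.ncard_empty]

/-- Hall's theorem with capacities. -/
lemma hall_capacity {ι : Type*} [Fintype ι] (NS : ι → Finset V) (g : V → ℕ)
    (hhall : ∀ s : Finset ι, s.card ≤ ∑ v ∈ s.biUnion NS, g v) :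
    ∃ σ : ι → V, (∀ i, σ i ∈ NS i) ∧
      ∀ v, ((univ : Finset ι).filter (fun i => σ i = v)).card ≤ g v := by
  classical
  set t : ι → Finset (V × ℕ) :=
    fun i => (NS i).biUnion (fun v => (Finset.range (g v)).image (fun k => (v, k))) with ht
  have hmem_t : ∀ i (p : V × ℕ), p ∈ t i ↔ p.1 ∈ NS i ∧ p.2 < g p.1 := by
    intro i p
    simp only [ht, Finset.mem_biUnion, Finset.mem_image, Finset.mem_range]
    constructor
    · rintro ⟨v, hv, k, hk, rfl⟩; exact ⟨hv, hk⟩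
    · rintro ⟨hv, hk⟩; exact ⟨p.1, hv, p.2, hk, rfl⟩
  have hcard_t : ∀ s : Finset ι, (s.biUnion t).card = ∑ v ∈ s.biUnion NS, g v := by
    intro s
    have he : s.biUnion t =
        (s.biUnion NS).biUnion (fun v => (Finset.range (g v)).image (fun k => (v, k))) := by
      ext p
      simp only [Finset.mem_biUnion, hmem_t, Finset.mem_image, Finset.mem_range]
      constructor
      · rintro ⟨i, hi, h1, h2⟩
        exact ⟨p.1, ⟨i, hi, h1⟩, p.2, h2, rfl⟩
      · rintro ⟨v, ⟨i, hi, hv⟩, k, hk, rfl⟩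
        exact ⟨i, hi, hv, hk⟩
    rw [he, Finset.card_biUnion]
    · apply Finset.sum_congr rfl
      intro v _
      rw [Finset.card_image_of_injective _ (fun a b h => (Prod.ext_iff.1 h).2), Finset.card_range]
    · intro v _ w _ hvw
      rw [Function.onFun, Finset.disjoint_left]
      rintro p hp hp'
      obtain ⟨k, _, rfl⟩ := Finset.mem_image.1 hp
      obtain ⟨k', _, he⟩ := Finset.mem_image.1 hp'
      exact hvw (congrArg Prod.fst he).symm
  have hH : ∀ s : Finset ι, s.card ≤ (s.biUnion t).card := by
    intro s; rw [hcard_t]; exact hhall s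
  obtain ⟨f, hfinj, hft⟩ := (Finset.all_card_le_biUnion_card_iff_exists_injective t).1 hH
  refine ⟨fun i => (f i).1, fun i => ((hmem_t i (f i)).1 (hft i)).1, fun v => ?_⟩
  have : ∀ i ∈ (univ : Finset ι).filter (fun i => (f i).1 = v), (f i).2 ∈ Finset.range (g v) := by
    intro i hi
    rw [Finset.mem_filter] at hi
    rw [Finset.mem_range, ← hi.2]
    exact ((hmem_t i (f i)).1 (hft i)).2
  refine le_trans (Finset.card_le_card_of_injOn (fun i => (f i).2) this ?_) (by
    rw [Finset.card_range])
  intro i hi j hj hij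
  rw [Finset.mem_coe, Finset.mem_filter] at hi hj
  apply hfinj
  exact Prod.ext (hi.2.trans hj.2.symm) hij

variable {G : SimpleGraph V}

/-- Decomposition of components after removing `S₁ ⊆ D` from a component `D`. -/
lemma comps_decomp {W S D S₁ : Finset V} (hS : S ⊆ W) (hD : D ∈ comps G (W \ S))
    (hS₁ : S₁ ⊆ D) :
    comps G (W \ (S ∪ S₁)) = (comps G (W \ S)).erase D ∪ comps G (D \ S₁) := by
  have hDW : D ⊆ W \ S := comps_subset hD
  have hsub : W \ (S ∪ S₁) ⊆ W \ S := by
    intro x hx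
    rw [Finset.mem_sdiff] at hx ⊢
    exact ⟨hx.1, fun h => hx.2 (Finset.mem_union_left _ h)⟩
  apply comps_eq_of_cover
  · intro C hC
    rcases Finset.mem_union.1 hC with hC | hC
    · -- other components survive
      have hCD : C ≠ D := (Finset.mem_erase.1 hC).1
      have hC' : C ∈ comps G (W \ S) := (Finset.mem_erase.1 hC).2
      apply comps_anti hC' hsub
      intro x hx
      have hxWS : x ∈ W \ S := comps_subset hC' hx
      rw [Finset.mem_sdiff] at hxWS ⊢
      refine ⟨hxWS.1, fun h => ?_⟩
      rcases Finset.mem_union.1 h with h | h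
      · exact hxWS.2 h
      · exact absurd (comps_eq_of_mem hC' hD hx (hS₁ h)) hCD
    · -- pieces of D
      apply comps_mono hC
      · intro x hx
        rw [Finset.mem_sdiff] at hx ⊢
        have hxws := Finset.mem_sdiff.1 (hDW hx.1)
        exact ⟨hxws.1, fun h => (Finset.mem_union.1 h).elim hxws.2 hx.2⟩
      · intro x hx y hy hadj
        have hxD : x ∈ D \ S₁ := comps_subset hC hx
        have hyWS : y ∈ W \ S := hsub hy
        have hyD : y ∈ D := comps_closed hD (Finset.mem_sdiff.1 hxD).1 hyWS hadj
        have hyS₁ : y ∉ S₁ := fun h => (Finset.mem_sdiff.1 hy).2 (Finset.mem_union_right _ h)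
        exact comps_closed hC hx (Finset.mem_sdiff.2 ⟨hyD, hyS₁⟩) hadj
  · intro v hv
    have hvWS : v ∈ W \ S := hsub hv
    set C := compSet G (W \ S) v with hC
    have hCmem : C ∈ comps G (W \ S) := compSet_mem_comps hvWS
    have hvC : v ∈ C := self_mem_compSet hvWS
    by_cases hCD : C = D
    · have hvD : v ∈ D := hCD ▸ hvC
      have hvS₁ : v ∉ S₁ := fun h => (Finset.mem_sdiff.1 hv).2 (Finset.mem_union_right _ h)
      have hvDS : v ∈ D \ S₁ := Finset.mem_sdiff.2 ⟨hvD, hvS₁⟩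
      exact ⟨compSet G (D \ S₁) v, Finset.mem_union_right _ (compSet_mem_comps hvDS),
        self_mem_compSet hvDS⟩
    · exact ⟨C, Finset.mem_union_left _ (Finset.mem_erase.2 ⟨hCD, hCmem⟩), hvC⟩

lemma comps_decomp_disjoint {W S D S₁ : Finset V} (hD : D ∈ comps G (W \ S))
    (hS₁ : S₁ ⊆ D) :
    Disjoint ((comps G (W \ S)).erase D) (comps G (D \ S₁)) := by
  rw [Finset.disjoint_left]
  intro C hC hC'
  have hCD : C ≠ D := (Finset.mem_erase.1 hC).1
  have hC2 : C ∈ comps G (W \ S) := (Finset.mem_erase.1 hC).2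
  obtain ⟨v, hv⟩ := comps_nonempty hC2
  have hvD : v ∈ D := (Finset.mem_sdiff.1 (comps_subset hC' hv)).1
  exact hCD (comps_eq_of_mem hC2 hD hv hvD)

/-- The eligible neighbours in `S` of a component `D`. -/
noncomputable def NSP (G : SimpleGraph V) (S : Finset V) (g : V → ℕ) (D : Finset V) :
    Finset V :=
  S.filter (fun v => ∃ x ∈ D, G.Adj v x ∧ 1 ≤ g x)

def Cond (G : SimpleGraph V) (g : V → ℕ) (W : Finset V) : Prop :=
  ∀ S ⊆ W, oddc G g (W \ S) ≤ ∑ v ∈ S, g v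

def Good (G : SimpleGraph V) (g : V → ℕ) (W : Finset V) (F : SimpleGraph V) : Prop :=
  F ≤ G ∧ (∀ ⦃x y⦄, F.Adj x y → x ∈ W ∧ y ∈ W) ∧
    ∀ v ∈ W, deg F v ≤ g v ∧ (Odd (deg F v) ↔ Odd (g v))

/-- The restricted Hall condition. -/
lemma restricted_hall [Fintype V] {W S : Finset V} {g : V → ℕ}
    (hSW : S ⊆ W) (hcond : Cond G g W) {S' : Finset V} (hS' : S' ⊆ S) :
    (((comps G (W \ S)).filter (fun C => Odd (∑ x ∈ C, g x))).filter
        (fun D => NSP G S g D ⊆ S')).card ≤ ∑ v ∈ S', g v := by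
  set T := ((comps G (W \ S)).filter (fun C => Odd (∑ x ∈ C, g x))).filter
    (fun D => NSP G S g D ⊆ S') with hT
  set Z : Finset V := T.biUnion (fun D => D.filter (fun x => g x = 0)) with hZ
  have hZW : Z ⊆ W \ S := by
    intro x hx
    obtain ⟨D, hD, hxD⟩ := Finset.mem_biUnion.1 hx
    exact comps_subset (Finset.mem_filter.1 (Finset.mem_filter.1 hD).1).1
      (Finset.mem_filter.1 hxD).1
  have hZg : ∀ x ∈ Z, g x = 0 := by
    intro x hx
    obtain ⟨D, hD, hxD⟩ := Finset.mem_biUnion.1 hx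
    exact (Finset.mem_filter.1 hxD).2
  set A := W \ (S' ∪ Z) with hA
  -- each D ∈ T contributes an odd component of A
  have hkey : ∀ D ∈ T, ∃ C, C ∈ comps G A ∧ Odd (∑ x ∈ C, g x) ∧ C ⊆ D := by
    intro D hDT
    have hDmem : D ∈ comps G (W \ S) := (Finset.mem_filter.1 (Finset.mem_filter.1 hDT).1).1
    have hDodd : Odd (∑ x ∈ D, g x) := (Finset.mem_filter.1 (Finset.mem_filter.1 hDT).1).2
    have hDNS : NSP G S g D ⊆ S' := (Finset.mem_filter.1 hDT).2
    set Dp := D.filter (fun x => g x ≠ 0) with hDp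
    have hDpA : Dp ⊆ A := by
      intro x hx
      have hxD : x ∈ D := (Finset.mem_filter.1 hx).1
      have hxg : g x ≠ 0 := (Finset.mem_filter.1 hx).2
      have hxWS := comps_subset hDmem hxD
      rw [hA, Finset.mem_sdiff]
      refine ⟨(Finset.mem_sdiff.1 hxWS).1, fun hc => ?_⟩
      rcases Finset.mem_union.1 hc with hc | hc
      · exact (Finset.mem_sdiff.1 hxWS).2 (hS' hc)
      · exact hxg (hZg _ hc)
    have hsum : ∑ x ∈ Dp, g x = ∑ x ∈ D, g x := Finset.sum_filter_ne_zero _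
    -- components of Dp are components of A
    have hDpcomp : ∀ C ∈ comps G Dp, C ∈ comps G A := by
      intro C hC
      apply comps_mono hC hDpA
      intro x hx y hy hadj
      have hxDp : x ∈ Dp := comps_subset hC hx
      have hxD : x ∈ D := (Finset.mem_filter.1 hxDp).1
      have hyW : y ∈ W := (Finset.mem_sdiff.1 hy).1
      have hyns : y ∉ S' ∪ Z := (Finset.mem_sdiff.1 hy).2
      by_cases hyS : y ∈ S
      · -- y ∈ S \ S' : impossible since then y ∈ NSP D ⊆ S'
        exfalso
        have : y ∈ NSP G S g D := by
          rw [NSP, Finset.mem_filter]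
          exact ⟨hyS, x, hxD, hadj.symm, Nat.one_le_iff_ne_zero.2 (Finset.mem_filter.1 hxDp).2⟩
        exact hyns (Finset.mem_union_left _ (hDNS this))
      · have hyWS : y ∈ W \ S := Finset.mem_sdiff.2 ⟨hyW, hyS⟩
        have hyD : y ∈ D := comps_closed hDmem hxD hyWS hadj
        have hyg : g y ≠ 0 := by
          intro h0
          exact hyns (Finset.mem_union_right _
            (Finset.mem_biUnion.2 ⟨D, hDT, Finset.mem_filter.2 ⟨hyD, h0⟩⟩))
        have hyDp : y ∈ Dp := Finset.mem_filter.2 ⟨hyD, hyg⟩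
        exact comps_closed hC hx hyDp hadj
    -- some component of Dp is odd
    have hoddc : 1 ≤ oddc G g Dp := by
      have hpar := oddc_parity (G := G) (A := Dp) g
      rw [hsum] at hpar
      have : oddc G g Dp % 2 = 1 := by rw [hpar]; exact Nat.odd_iff.1 hDodd
      omega
    have : ((comps G Dp).filter (fun C => Odd (∑ x ∈ C, g x))).Nonempty := by
      rw [← Finset.card_pos]; exact hoddc
    obtain ⟨C, hC⟩ := this
    refine ⟨C, hDpcomp C (Finset.mem_filter.1 hC).1, (Finset.mem_filter.1 hC).2, ?_⟩
    exact (comps_subset (Finset.mem_filter.1 hC).1).trans (Finset.filter_subset _ _)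
  -- choose one odd component per D, injectively
  classical
  choose cD hc1 hc2 hc3 using hkey
  have hinj : ∀ D₁ h₁ D₂ h₂, cD D₁ h₁ = cD D₂ h₂ → D₁ = D₂ := by
    intro D₁ h₁ D₂ h₂ heq
    obtain ⟨v, hv⟩ := comps_nonempty (hc1 D₁ h₁)
    have hv₁ : v ∈ D₁ := hc3 D₁ h₁ hv
    have hv₂ : v ∈ D₂ := hc3 D₂ h₂ (heq ▸ hv)
    exact comps_eq_of_mem (Finset.mem_filter.1 (Finset.mem_filter.1 h₁).1).1
      (Finset.mem_filter.1 (Finset.mem_filter.1 h₂).1).1 hv₁ hv₂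
  have hcount : T.card ≤ oddc G g A := by
    rw [oddc]
    have := Finset.card_le_card_of_injOn (f := fun D => if h : D ∈ T then cD D h else ∅)
      (s := T) (t := (comps G A).filter (fun C => Odd (∑ x ∈ C, g x))) ?_ ?_
    · exact this
    · intro D hD
      have hD' : D ∈ T := hD
      simp only [dif_pos hD']
      exact Finset.mem_filter.2 ⟨hc1 D hD, hc2 D hD⟩
    · intro D₁ h₁ D₂ h₂ heq
      rw [Finset.mem_coe] at h₁ h₂
      simp only [dif_pos h₁, dif_pos h₂] at heq
      exact hinj _ _ _ _ heq
  have hSZW : S' ∪ Z ⊆ W := by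
    intro x hx
    rcases Finset.mem_union.1 hx with hx | hx
    · exact hSW (hS' hx)
    · exact (Finset.mem_sdiff.1 (hZW hx)).1
  have hcond' := hcond (S' ∪ Z) hSZW
  have hsum : ∑ v ∈ S' ∪ Z, g v = ∑ v ∈ S', g v := by
    rw [Finset.sum_union]
    · have : ∑ v ∈ Z, g v = 0 := Finset.sum_eq_zero hZg
      omega
    · rw [Finset.disjoint_left]
      intro x hx hxZ
      exact (Finset.mem_sdiff.1 (hZW hxZ)).2 (hS' hx)
  calc T.card ≤ oddc G g A := hcount
    _ ≤ ∑ v ∈ S' ∪ Z, g v := hcond'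
    _ = ∑ v ∈ S', g v := hsum

end StmtAux4

namespace StmtAux5
open SimpleGraph Finset StmtAux StmtAux4
open scoped Classical

variable {V : Type*}

/-- Union of component subgraphs together with the star of matching edges. -/
def FF (CC 𝒟 : Finset (Finset V)) (FC : Finset V → SimpleGraph V) (σ ξ : Finset V → V) :
    SimpleGraph V where
  Adj x y := (∃ C ∈ CC, (FC C).Adj x y) ∨
    (x ≠ y ∧ ∃ D ∈ 𝒟, (x = σ D ∧ y = ξ D) ∨ (x = ξ D ∧ y = σ D))
  symm := by
    constructor
    rintro x y (⟨C, hC, h⟩ | ⟨hne, D, hD, h⟩)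
    · exact Or.inl ⟨C, hC, h.symm⟩
    · refine Or.inr ⟨hne.symm, D, hD, ?_⟩
      rcases h with ⟨h1, h2⟩ | ⟨h1, h2⟩
      · exact Or.inr ⟨h2, h1⟩
      · exact Or.inl ⟨h2, h1⟩
  loopless := by
    constructor
    rintro x (⟨C, hC, h⟩ | ⟨hne, _⟩)
    · exact (FC C).loopless.irrefl x h
    · exact hne rfl

lemma odd_succ_iff {a b : ℕ} (hb : 1 ≤ b) (h : Odd a ↔ Odd (b - 1)) :
    (Odd (a + 1) ↔ Odd b) := by
  have h' : (a % 2 = 1) ↔ ((b - 1) % 2 = 1) := by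
    rw [← Nat.odd_iff, ← Nat.odd_iff]; exact h
  rw [Nat.odd_iff, Nat.odd_iff]
  by_cases hA : a % 2 = 1
  · have hB := h'.1 hA; omega
  · have hB : ¬((b - 1) % 2 = 1) := fun hB => hA (h'.2 hB); omega

lemma assembly [Fintype V] {G : SimpleGraph V} {W S : Finset V} (hSW : S ⊆ W)
    {g : V → ℕ} {𝒟 CC : Finset (Finset V)} {σ ξ : Finset V → V}
    {FC : Finset V → SimpleGraph V}
    (hCCsub : ∀ C ∈ CC, C ⊆ W \ S)
    (hdisj : ∀ C ∈ CC, ∀ C' ∈ CC, C ≠ C' → Disjoint C C')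
    (hcover : ∀ v ∈ W \ S, ∃ C ∈ CC, v ∈ C)
    (h𝒟 : 𝒟 ⊆ CC)
    (hσS : ∀ D ∈ 𝒟, σ D ∈ S)
    (hξD : ∀ D ∈ 𝒟, ξ D ∈ D)
    (hadjσξ : ∀ D ∈ 𝒟, G.Adj (σ D) (ξ D))
    (hgξ : ∀ D ∈ 𝒟, 1 ≤ g (ξ D))
    (hcnt : ∀ v ∈ S, (𝒟.filter (fun D => σ D = v)).card = g v)
    (hFC : ∀ C ∈ CC,
      Good G (if C ∈ 𝒟 then (fun v => if v = ξ C then g v - 1 else g v) else g) C (FC C)) :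
    ∃ F, Good G g W F := by
  set F := FF CC 𝒟 FC σ ξ with hF
  have hFadj : ∀ x y, F.Adj x y ↔ ((∃ C ∈ CC, (FC C).Adj x y) ∨
      (x ≠ y ∧ ∃ D ∈ 𝒟, (x = σ D ∧ y = ξ D) ∨ (x = ξ D ∧ y = σ D))) := fun x y => Iff.rfl
  -- basic facts
  have hGoodC : ∀ C ∈ CC, (FC C) ≤ G ∧ (∀ ⦃x y⦄, (FC C).Adj x y → x ∈ C ∧ y ∈ C) :=
    fun C hC => ⟨(hFC C hC).1, (hFC C hC).2.1⟩
  have hξmem : ∀ D ∈ 𝒟, ξ D ∈ W \ S := fun D hD => hCCsub D (h𝒟 hD) (hξD D hD)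
  -- F ≤ G
  have hFG : F ≤ G := by
    intro x y h
    rcases (hFadj x y).1 h with ⟨C, hC, h'⟩ | ⟨hne, D, hD, h'⟩
    · exact (hGoodC C hC).1 h'
    · rcases h' with ⟨rfl, rfl⟩ | ⟨rfl, rfl⟩
      · exact hadjσξ D hD
      · exact (hadjσξ D hD).symm
  -- support
  have hsupp : ∀ ⦃x y⦄, F.Adj x y → x ∈ W ∧ y ∈ W := by
    intro x y h
    rcases (hFadj x y).1 h with ⟨C, hC, h'⟩ | ⟨hne, D, hD, h'⟩
    · have h2 := (hGoodC C hC).2 h'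
      have h3 := hCCsub C hC
      exact ⟨(Finset.mem_sdiff.1 (h3 h2.1)).1, (Finset.mem_sdiff.1 (h3 h2.2)).1⟩
    · rcases h' with ⟨rfl, rfl⟩ | ⟨rfl, rfl⟩
      · exact ⟨hSW (hσS D hD), (Finset.mem_sdiff.1 (hξmem D hD)).1⟩
      · exact ⟨(Finset.mem_sdiff.1 (hξmem D hD)).1, hSW (hσS D hD)⟩
  -- neighbor sets
  have hNS : ∀ v ∈ S, F.neighborSet v = ↑((𝒟.filter (fun D => σ D = v)).image ξ) := by
    intro v hv
    ext y
    simp only [SimpleGraph.mem_neighborSet, Finset.coe_image, Set.mem_image, Finset.mem_coe,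
      Finset.mem_filter]
    constructor
    · intro h
      rcases (hFadj v y).1 h with ⟨C, hC, h'⟩ | ⟨hne, D, hD, h'⟩
      · exfalso
        have h2 := ((hGoodC C hC).2 h').1
        exact (Finset.mem_sdiff.1 (hCCsub C hC h2)).2 hv
      · rcases h' with ⟨h1, rfl⟩ | ⟨h1, rfl⟩
        · exact ⟨D, ⟨hD, h1.symm⟩, rfl⟩
        · exfalso
          exact (Finset.mem_sdiff.1 (hξmem D hD)).2 (h1 ▸ hv)
    · rintro ⟨D, ⟨hD, hσ⟩, rfl⟩
      refine (hFadj v (ξ D)).2 (Or.inr ⟨?_, D, hD, Or.inl ⟨hσ.symm, rfl⟩⟩)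
      intro hc
      exact (Finset.mem_sdiff.1 (hξmem D hD)).2 (hc ▸ hv)
  have hdegS : ∀ v ∈ S, deg F v = g v := by
    intro v hv
    rw [deg, hNS v hv, Set.ncard_coe_finset]
    rw [Finset.card_image_of_injOn, hcnt v hv]
    intro D hD D' hD' hξξ
    rw [Finset.mem_coe, Finset.mem_filter] at hD hD'
    by_contra hne
    have := hdisj D (h𝒟 hD.1) D' (h𝒟 hD'.1) hne
    rw [Finset.disjoint_left] at this
    exact this (hξD D hD.1) (hξξ ▸ hξD D' hD'.1)
  -- v in a component
  have hN1 : ∀ (C₀ : Finset V), C₀ ∈ CC → ∀ v ∈ C₀,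
      {y | ∃ C ∈ CC, (FC C).Adj v y} = (FC C₀).neighborSet v := by
    intro C₀ hC₀ v hv
    ext y
    simp only [Set.mem_setOf_eq, SimpleGraph.mem_neighborSet]
    constructor
    · rintro ⟨C, hC, h⟩
      have h2 := ((hGoodC C hC).2 h).1
      rcases eq_or_ne C C₀ with rfl | hne
      · exact h
      · exact absurd (Finset.disjoint_left.1 (hdisj C hC C₀ hC₀ hne) h2) (fun hc => hc hv)
    · intro h
      exact ⟨C₀, hC₀, h⟩
  have hN2none : ∀ (C₀ : Finset V), C₀ ∈ CC → ∀ v ∈ C₀, ¬(C₀ ∈ 𝒟 ∧ v = ξ C₀) →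
      ∀ y, ¬(v ≠ y ∧ ∃ D ∈ 𝒟, (v = σ D ∧ y = ξ D) ∨ (v = ξ D ∧ y = σ D)) := by
    rintro C₀ hC₀ v hv hnot y ⟨hne, D, hD, h⟩
    rcases h with ⟨h1, _⟩ | ⟨h1, _⟩
    · exact (Finset.mem_sdiff.1 (hCCsub C₀ hC₀ hv)).2 (h1 ▸ hσS D hD)
    · -- v = ξ D so D = C₀
      have hvD : v ∈ D := h1 ▸ hξD D hD
      rcases eq_or_ne D C₀ with rfl | hne'
      · exact hnot ⟨hD, h1⟩
      · exact absurd (Finset.disjoint_left.1 (hdisj D (h𝒟 hD) C₀ hC₀ hne') hvD)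
          (fun hc => hc hv)
  have hdegC_plain : ∀ (C₀ : Finset V), C₀ ∈ CC → ∀ v ∈ C₀, ¬(C₀ ∈ 𝒟 ∧ v = ξ C₀) →
      deg F v = deg (FC C₀) v := by
    intro C₀ hC₀ v hv hnot
    have : F.neighborSet v = (FC C₀).neighborSet v := by
      ext y
      simp only [SimpleGraph.mem_neighborSet]
      constructor
      · intro h
        rcases (hFadj v y).1 h with h' | h'
        · exact (Set.ext_iff.1 (hN1 C₀ hC₀ v hv) y).1 h'
        · exact absurd h' (hN2none C₀ hC₀ v hv hnot y)
      · intro h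
        exact (hFadj v y).2 (Or.inl ⟨C₀, hC₀, h⟩)
    rw [deg, this]; rfl
  have hdegC_xi : ∀ (C₀ : Finset V), C₀ ∈ CC → C₀ ∈ 𝒟 →
      deg F (ξ C₀) = deg (FC C₀) (ξ C₀) + 1 := by
    intro C₀ hC₀ hD₀
    have hv : ξ C₀ ∈ C₀ := hξD C₀ hD₀
    have hNeq : F.neighborSet (ξ C₀) = (FC C₀).neighborSet (ξ C₀) ∪ {σ C₀} := by
      ext y
      simp only [SimpleGraph.mem_neighborSet, Set.mem_union, Set.mem_singleton_iff]
      constructor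
      · intro h
        rcases (hFadj _ y).1 h with h' | ⟨hne, D, hD, h'⟩
        · exact Or.inl ((Set.ext_iff.1 (hN1 C₀ hC₀ _ hv) y).1 h')
        · rcases h' with ⟨h1, _⟩ | ⟨h1, rfl⟩
          · exact absurd (h1 ▸ hσS D hD)
              (fun hc => (Finset.mem_sdiff.1 (hCCsub C₀ hC₀ hv)).2 hc)
          · -- ξ C₀ = ξ D ⇒ D = C₀
            have hvD : ξ C₀ ∈ D := h1 ▸ hξD D hD
            rcases eq_or_ne D C₀ with rfl | hne'
            · exact Or.inr rfl
            · exact absurd (Finset.disjoint_left.1 (hdisj D (h𝒟 hD) C₀ hC₀ hne') hvD)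
                (fun hc => hc hv)
      · intro h
        rcases h with h | rfl
        · exact (hFadj _ y).2 (Or.inl ⟨C₀, hC₀, h⟩)
        · refine (hFadj _ _).2 (Or.inr ⟨?_, C₀, hD₀, Or.inr ⟨rfl, rfl⟩⟩)
          intro hc
          exact (Finset.mem_sdiff.1 (hξmem C₀ hD₀)).2 (hc ▸ hσS C₀ hD₀)
    have hdisj' : Disjoint ((FC C₀).neighborSet (ξ C₀)) ({σ C₀} : Set V) := by
      rw [Set.disjoint_singleton_right]
      intro hc
      have h2 := ((hGoodC C₀ hC₀).2 hc).2
      exact (Finset.mem_sdiff.1 (hCCsub C₀ hC₀ h2)).2 (hσS C₀ hD₀)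
    rw [deg, hNeq, Set.ncard_union_eq hdisj' (Set.toFinite _) (Set.toFinite _),
      Set.ncard_singleton]
    rfl
  refine ⟨F, hFG, hsupp, ?_⟩
  intro v hv
  by_cases hvS : v ∈ S
  · rw [hdegS v hvS]
    exact ⟨le_refl _, Iff.rfl⟩
  · obtain ⟨C₀, hC₀, hvC₀⟩ := hcover v (Finset.mem_sdiff.2 ⟨hv, hvS⟩)
    have hGood := hFC C₀ hC₀
    by_cases hcase : C₀ ∈ 𝒟 ∧ v = ξ C₀
    · obtain ⟨hD₀, rfl⟩ := hcase
      rw [hdegC_xi C₀ hC₀ hD₀]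
      have h3 := hGood.2.2 _ hvC₀
      rw [if_pos hD₀] at h3
      rw [if_pos rfl] at h3
      exact ⟨by have := h3.1; have := hgξ C₀ hD₀; omega,
        odd_succ_iff (hgξ C₀ hD₀) h3.2⟩
    · rw [hdegC_plain C₀ hC₀ v hvC₀ hcase]
      have h3 := hGood.2.2 v hvC₀
      by_cases hD₀ : C₀ ∈ 𝒟
      · rw [if_pos hD₀] at h3
        have hvne : v ≠ ξ C₀ := fun hc => hcase ⟨hD₀, hc⟩
        rw [if_neg hvne] at h3
        exact h3
      · rw [if_neg hD₀] at h3
        exact h3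

end StmtAux5

namespace StmtAux6
open SimpleGraph Finset StmtAux StmtAux4
open scoped Classical

variable {V : Type*} {G : SimpleGraph V}

lemma oddc_union_split {W S C S₁ : Finset V} (hSW : S ⊆ W)
    (hC : C ∈ comps G (W \ S)) (hS₁ : S₁ ⊆ C) (g : V → ℕ) :
    oddc G g (W \ (S ∪ S₁)) =
      (if Odd (∑ x ∈ C, g x) then oddc G g (W \ S) - 1 else oddc G g (W \ S)) +
        oddc G g (C \ S₁) := by
  have hdec := comps_decomp (G := G) hSW hC hS₁
  have hdis := comps_decomp_disjoint (G := G) hC hS₁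
  rw [oddc, hdec, Finset.filter_union,
    Finset.card_union_of_disjoint (Finset.disjoint_filter_filter hdis),
    Finset.filter_erase]
  by_cases hodd : Odd (∑ x ∈ C, g x)
  · rw [if_pos hodd, Finset.card_erase_of_mem (Finset.mem_filter.2 ⟨hC, hodd⟩)]
    rfl
  · have hnm : C ∉ (comps G (W \ S)).filter (fun C => Odd (∑ x ∈ C, g x)) :=
      fun hc => hodd (Finset.mem_filter.1 hc).2
    rw [if_neg hodd, Finset.erase_eq_of_notMem hnm]
    rfl

lemma sum_dec_at {S₁ : Finset V} {g : V → ℕ} {x : V} (hx : x ∈ S₁) (hgx : 1 ≤ g x) :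
    (∑ v ∈ S₁, (if v = x then g v - 1 else g v)) + 1 = ∑ v ∈ S₁, g v := by
  rw [← Finset.add_sum_erase _ g hx, ← Finset.add_sum_erase _ _ hx]
  have h1 : ∑ v ∈ S₁.erase x, (if v = x then g v - 1 else g v)
      = ∑ v ∈ S₁.erase x, g v :=
    Finset.sum_congr rfl (fun v hv => if_neg (Finset.ne_of_mem_erase hv))
  rw [h1, if_pos rfl]
  omega

lemma sum_eq_at {S₁ : Finset V} {g : V → ℕ} {x : V} (hx : x ∉ S₁) :
    (∑ v ∈ S₁, (if v = x then g v - 1 else g v)) = ∑ v ∈ S₁, g v :=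
  Finset.sum_congr rfl (fun v hv => if_neg (fun hc => hx (by rw [← hc]; exact hv)))

lemma cond_even [Fintype V] {W S E : Finset V} {g : V → ℕ}
    (hSW : S ⊆ W) (hcond : Cond G g W) (hE : E ∈ comps G (W \ S))
    (hEev : ¬ Odd (∑ v ∈ E, g v)) (htight : oddc G g (W \ S) = ∑ v ∈ S, g v) :
    Cond G g E := by
  intro S₁ hS₁
  have hsp := oddc_union_split hSW hE hS₁ g
  rw [if_neg hEev, htight] at hsp
  have hsub : S ∪ S₁ ⊆ W := by
    intro y hy
    rcases Finset.mem_union.1 hy with hy | hy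
    · exact hSW hy
    · exact (Finset.mem_sdiff.1 (comps_subset hE (hS₁ hy))).1
  have hle := hcond (S ∪ S₁) hsub
  have hdisj : Disjoint S S₁ := by
    rw [Finset.disjoint_left]
    intro a ha ha₁
    exact (Finset.mem_sdiff.1 (comps_subset hE (hS₁ ha₁))).2 ha
  rw [Finset.sum_union hdisj] at hle
  omega

lemma cond_odd [Fintype V] {W S D : Finset V} {g : V → ℕ} {x : V}
    (hSW : S ⊆ W) (hcond : Cond G g W) (hD : D ∈ comps G (W \ S))
    (hDodd : Odd (∑ v ∈ D, g v)) (hxD : x ∈ D) (hgx : 1 ≤ g x)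
    (htight : oddc G g (W \ S) = ∑ v ∈ S, g v)
    (hnotight : ∀ S₁ ⊆ D, S₁.Nonempty → oddc G g (W \ (S ∪ S₁)) ≠ ∑ v ∈ S ∪ S₁, g v) :
    Cond G (fun v => if v = x then g v - 1 else g v) D := by
  intro S₁ hS₁
  rcases Finset.eq_empty_or_nonempty S₁ with rfl | hS₁ne
  · rw [Finset.sdiff_empty, Finset.sum_empty, oddc, comps_self hD]
    have hev : ¬ Odd (∑ v ∈ D, (fun v => if v = x then g v - 1 else g v) v) := by
      have h1 := sum_dec_at hxD hgx (g := g)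
      have hbeta : (∑ v ∈ D, (fun v => if v = x then g v - 1 else g v) v)
          = ∑ v ∈ D, (if v = x then g v - 1 else g v) := rfl
      rw [Nat.odd_iff] at hDodd ⊢
      omega
    rw [Finset.filter_singleton, if_neg hev, Finset.card_empty]
  · have hsp := oddc_union_split hSW hD hS₁ g
    rw [if_pos hDodd, htight] at hsp
    have hsub : S ∪ S₁ ⊆ W := by
      intro y hy
      rcases Finset.mem_union.1 hy with hy | hy
      · exact hSW hy
      · exact (Finset.mem_sdiff.1 (comps_subset hD (hS₁ hy))).1
    have hle := hcond (S ∪ S₁) hsub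
    have hdisjS : Disjoint S S₁ := by
      rw [Finset.disjoint_left]
      intro a ha ha₁
      exact (Finset.mem_sdiff.1 (comps_subset hD (hS₁ ha₁))).2 ha
    have hne := hnotight S₁ hS₁ hS₁ne
    rw [Finset.sum_union hdisjS] at hle hne
    have hpar := oddc_parity (G := G) (A := D \ S₁) g
    have hsum_split : ∑ v ∈ D \ S₁, g v + ∑ v ∈ S₁, g v = ∑ v ∈ D, g v :=
      Finset.sum_sdiff hS₁
    have hSpos : 1 ≤ ∑ v ∈ S, g v := by
      rw [← htight]
      exact Finset.card_pos.2 ⟨D, Finset.mem_filter.2 ⟨hD, hDodd⟩⟩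
    have hDoddm := Nat.odd_iff.1 hDodd
    have hkey : oddc G g (D \ S₁) + 1 ≤ ∑ v ∈ S₁, g v := by omega
    by_cases hx : x ∈ S₁
    · have hcongr : oddc G (fun v => if v = x then g v - 1 else g v) (D \ S₁)
          = oddc G g (D \ S₁) := by
        rw [oddc, oddc]
        congr 1
        apply Finset.filter_congr
        intro C hC
        have hsame : ∑ v ∈ C, (if v = x then g v - 1 else g v) = ∑ v ∈ C, g v := by
          apply Finset.sum_congr rfl
          intro v hv
          refine if_neg (fun hc => ?_)
          exact (Finset.mem_sdiff.1 (comps_subset hC hv)).2 (by rw [hc]; exact hx)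
        rw [hsame]
      have hS2 := sum_dec_at hx hgx (g := g)
      have hbeta : (∑ v ∈ S₁, (fun v => if v = x then g v - 1 else g v) v)
          = ∑ v ∈ S₁, (if v = x then g v - 1 else g v) := rfl
      rw [hcongr]
      omega
    · have hS2 := sum_eq_at hx (g := g)
      have hle2 : oddc G (fun v => if v = x then g v - 1 else g v) (D \ S₁)
          ≤ oddc G g (D \ S₁) + 1 := by
        rw [oddc, oddc]
        have hsub2 : (comps G (D \ S₁)).filter
              (fun C => Odd (∑ v ∈ C, (if v = x then g v - 1 else g v))) ⊆
            (comps G (D \ S₁)).filter (fun C => Odd (∑ v ∈ C, g v)) ∪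
              (comps G (D \ S₁)).filter (fun C => x ∈ C) := by
          intro C hC
          rw [Finset.mem_filter] at hC
          by_cases hxC : x ∈ C
          · exact Finset.mem_union_right _ (Finset.mem_filter.2 ⟨hC.1, hxC⟩)
          · refine Finset.mem_union_left _ (Finset.mem_filter.2 ⟨hC.1, ?_⟩)
            have hsame : ∑ v ∈ C, g v = ∑ v ∈ C, (if v = x then g v - 1 else g v) := by
              apply Finset.sum_congr rfl
              intro v hv
              exact (if_neg (fun hc => hxC (by rw [← hc]; exact hv))).symm
            rw [hsame]
            exact hC.2
        have hone : ((comps G (D \ S₁)).filter (fun C => x ∈ C)).card ≤ 1 := by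
          rw [Finset.card_le_one]
          intro C hC C' hC'
          rw [Finset.mem_filter] at hC hC'
          exact comps_eq_of_mem hC.1 hC'.1 hC.2 hC'.2
        calc ((comps G (D \ S₁)).filter
              (fun C => Odd (∑ v ∈ C, (if v = x then g v - 1 else g v)))).card
            ≤ _ := Finset.card_le_card hsub2
          _ ≤ _ := Finset.card_union_le _ _
          _ ≤ _ + 1 := by omega
      have hbeta : (∑ v ∈ S₁, (fun v => if v = x then g v - 1 else g v) v)
          = ∑ v ∈ S₁, (if v = x then g v - 1 else g v) := rfl
      omega

end StmtAux6

namespace StmtAux7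
open SimpleGraph Finset StmtAux StmtAux4 StmtAux5 StmtAux6
open scoped Classical

variable {V : Type*}

lemma good_bot {G : SimpleGraph V} {g : V → ℕ} {W : Finset V}
    (h : ∀ v ∈ W, g v = 0) : Good G g W (⊥ : SimpleGraph V) := by
  refine ⟨bot_le, ?_, ?_⟩
  · intro x y h'
    exact absurd h' (by simp)
  · intro v hv
    rw [deg_bot, h v hv]
    exact ⟨Nat.le_refl _, Iff.rfl⟩

set_option maxHeartbeats 2000000 in
lemma kksAux [Fintype V] (G : SimpleGraph V) :
    ∀ (N n : ℕ) (W : Finset V) (g : V → ℕ), W.card ≤ N → (∑ v ∈ W, g v) ≤ n →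
      Cond G g W → ∃ F, Good G g W F := by
  intro N
  induction N with
  | zero =>
    intro n W g hcard _ _
    have hW : W = ∅ := Finset.card_eq_zero.1 (Nat.le_zero.1 hcard)
    exact ⟨⊥, good_bot (by simp [hW])⟩
  | succ N ihN =>
    intro n
    induction n with
    | zero =>
      intro W g hcard hsum _
      refine ⟨⊥, good_bot ?_⟩
      intro v hv
      exact (Finset.sum_eq_zero_iff.1 (Nat.le_zero.1 hsum)) v hv
    | succ n ihn =>
      intro W g hcard hsum hcond
      by_cases h0 : ∑ v ∈ W, g v = 0
      · exact ⟨⊥, good_bot (fun v hv => (Finset.sum_eq_zero_iff.1 h0) v hv)⟩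
      have heven : (∑ v ∈ W, g v) % 2 = 0 := by
        have h1 := hcond ∅ (Finset.empty_subset _)
        rw [Finset.sdiff_empty, Finset.sum_empty] at h1
        have h2 := oddc_parity (G := G) (A := W) g
        omega
      by_cases hred : ∃ u ∈ W, 2 ≤ g u ∧
          Cond G (fun v => if v = u then g v - 2 else g v) W
      · obtain ⟨u, huW, hgu, hcond'⟩ := hred
        have hsum' : (∑ v ∈ W, (fun v => if v = u then g v - 2 else g v) v) + 2
            = ∑ v ∈ W, g v := by
          rw [← Finset.add_sum_erase _ g huW, ← Finset.add_sum_erase _ _ huW]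
          have h1 : ∑ v ∈ W.erase u, (fun v => if v = u then g v - 2 else g v) v
              = ∑ v ∈ W.erase u, g v :=
            Finset.sum_congr rfl (fun v hv => if_neg (Finset.ne_of_mem_erase hv))
          rw [h1, if_pos rfl]
          omega
        obtain ⟨F, hF⟩ := ihn W (fun v => if v = u then g v - 2 else g v) hcard
          (by beta_reduce at hsum' ⊢; omega) hcond'
        refine ⟨F, hF.1, hF.2.1, ?_⟩
        intro v hv
        obtain ⟨h1, h2⟩ := hF.2.2 v hv
        replace h1 : deg F v ≤ if v = u then g v - 2 else g v := h1
        replace h2 : Odd (deg F v) ↔ Odd (if v = u then g v - 2 else g v) := h2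
        by_cases hvu : v = u
        · subst hvu
          rw [if_pos rfl] at h1 h2
          constructor
          · omega
          · rw [h2, Nat.odd_iff, Nat.odd_iff]
            omega
        · rw [if_neg hvu] at h1 h2
          exact ⟨h1, h2⟩
      -- main case: find a tight set
      push_neg at hred
      have hTex : ∃ S₀, S₀ ⊆ W ∧ S₀.Nonempty ∧
          oddc G g (W \ S₀) = ∑ v ∈ S₀, g v := by
        have hex : ∃ u ∈ W, 1 ≤ g u := by
          by_contra hc
          push_neg at hc
          exact h0 (Finset.sum_eq_zero (fun v hv => by have := hc v hv; omega))
        obtain ⟨u, huW, hgu1⟩ := hex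
        by_cases hgu2 : 2 ≤ g u
        · have hnc := hred u huW hgu2
          rw [Cond] at hnc
          push_neg at hnc
          obtain ⟨S₀, hS₀W, hviol⟩ := hnc
          have hocongr : oddc G (fun v => if v = u then g v - 2 else g v) (W \ S₀)
              = oddc G g (W \ S₀) := by
            rw [oddc, oddc]
            congr 1
            apply Finset.filter_congr
            intro C _
            have hsplit : ((∑ v ∈ C, (fun v => if v = u then g v - 2 else g v) v) % 2)
                = (∑ v ∈ C, g v) % 2 := by
              by_cases huC : u ∈ C
              · rw [← Finset.add_sum_erase _ _ huC, ← Finset.add_sum_erase _ g huC]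
                have h1 : ∑ v ∈ C.erase u, (fun v => if v = u then g v - 2 else g v) v
                    = ∑ v ∈ C.erase u, g v :=
                  Finset.sum_congr rfl (fun v hv => if_neg (Finset.ne_of_mem_erase hv))
                rw [h1, if_pos rfl]
                omega
              · exact congrArg (· % 2) (Finset.sum_congr rfl
                  (fun v hv => if_neg (fun hc => huC (by rw [← hc]; exact hv))))
            rw [Nat.odd_iff, Nat.odd_iff, hsplit]
          by_cases huS : u ∈ S₀
          · refine ⟨S₀, hS₀W, ⟨u, huS⟩, ?_⟩
            have hs2 : (∑ v ∈ S₀, (fun v => if v = u then g v - 2 else g v) v) + 2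
                = ∑ v ∈ S₀, g v := by
              rw [← Finset.add_sum_erase _ g huS, ← Finset.add_sum_erase _ _ huS]
              have h1 : ∑ v ∈ S₀.erase u, (fun v => if v = u then g v - 2 else g v) v
                  = ∑ v ∈ S₀.erase u, g v :=
                Finset.sum_congr rfl (fun v hv => if_neg (Finset.ne_of_mem_erase hv))
              rw [h1, if_pos rfl]
              omega
            have hbr : (∑ v ∈ S₀, (fun v => if v = u then g v - 2 else g v) v)
                = ∑ v ∈ S₀, if v = u then g v - 2 else g v := rfl
            have hcW := hcond S₀ hS₀W
            have hp := oddc_parity (G := G) (A := W \ S₀) g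
            have hsd : ∑ v ∈ W \ S₀, g v + ∑ v ∈ S₀, g v = ∑ v ∈ W, g v :=
              Finset.sum_sdiff hS₀W
            rw [hocongr] at hviol
            omega
          · exfalso
            have heq : ∑ v ∈ S₀, (fun v => if v = u then g v - 2 else g v) v
                = ∑ v ∈ S₀, g v :=
              Finset.sum_congr rfl (fun v hv => if_neg (fun hc => huS (by rw [← hc]; exact hv)))
            have hbr : (∑ v ∈ S₀, (fun v => if v = u then g v - 2 else g v) v)
                = ∑ v ∈ S₀, if v = u then g v - 2 else g v := rfl
            rw [hocongr] at hviol
            have := hcond S₀ hS₀W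
            omega
        · refine ⟨{u}, Finset.singleton_subset_iff.2 huW, Finset.singleton_nonempty u, ?_⟩
          have hle := hcond {u} (Finset.singleton_subset_iff.2 huW)
          have hp := oddc_parity (G := G) (A := W \ {u}) g
          have hsd : ∑ v ∈ W \ {u}, g v + ∑ v ∈ {u}, g v = ∑ v ∈ W, g v :=
            Finset.sum_sdiff (Finset.singleton_subset_iff.2 huW)
          rw [Finset.sum_singleton] at hle hsd ⊢
          omega
      obtain ⟨S₀, hS₀W, hS₀ne, hS₀t⟩ := hTex
      -- maximal tight set
      obtain ⟨S, hSTS, hSmax⟩ := Finset.exists_max_image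
        (W.powerset.filter (fun S => S.Nonempty ∧ oddc G g (W \ S) = ∑ v ∈ S, g v))
        Finset.card
        ⟨S₀, Finset.mem_filter.2 ⟨Finset.mem_powerset.2 hS₀W, hS₀ne, hS₀t⟩⟩
      rw [Finset.mem_filter, Finset.mem_powerset] at hSTS
      obtain ⟨hSW, hSne, htight⟩ := hSTS
      obtain ⟨v₀, hv₀⟩ := hSne
      have hSne : S.Nonempty := ⟨v₀, hv₀⟩
      set CC := comps G (W \ S) with hCC
      set DD := CC.filter (fun C => Odd (∑ x ∈ C, g x)) with hDD
      have hDDcard : DD.card = ∑ v ∈ S, g v := htight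
      have hnotight : ∀ D ∈ DD, ∀ S₁ ⊆ D, S₁.Nonempty →
          oddc G g (W \ (S ∪ S₁)) ≠ ∑ v ∈ S ∪ S₁, g v := by
        intro D hD S₁ hS₁D hS₁ne hc
        have hDsub : D ⊆ W \ S := comps_subset (Finset.mem_filter.1 hD).1
        have hUW : S ∪ S₁ ⊆ W := by
          intro y hy
          rcases Finset.mem_union.1 hy with hy | hy
          · exact hSW hy
          · exact (Finset.mem_sdiff.1 (hDsub (hS₁D hy))).1
        have hmem : (S ∪ S₁) ∈ W.powerset.filter
            (fun S => S.Nonempty ∧ oddc G g (W \ S) = ∑ v ∈ S, g v) :=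
          Finset.mem_filter.2 ⟨Finset.mem_powerset.2 hUW,
            ⟨v₀, Finset.mem_union_left _ hv₀⟩, hc⟩
        have hcard2 := hSmax _ hmem
        have hdisj : Disjoint S S₁ := by
          rw [Finset.disjoint_left]
          intro a ha ha₁
          exact (Finset.mem_sdiff.1 (hDsub (hS₁D ha₁))).2 ha
        rw [Finset.card_union_of_disjoint hdisj] at hcard2
        obtain ⟨a, ha⟩ := hS₁ne
        have : 1 ≤ S₁.card := Finset.card_pos.2 ⟨a, ha⟩
        omega
      -- Hall
      have hhall : ∀ s : Finset {D // D ∈ DD},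
          s.card ≤ ∑ v ∈ s.biUnion (fun i => NSP G S g i.1), g v := by
        intro s
        set S' := s.biUnion (fun i => NSP G S g i.1) with hS'
        have hS'S : S' ⊆ S := by
          intro v hv
          obtain ⟨i, _, hvi⟩ := Finset.mem_biUnion.1 hv
          exact Finset.filter_subset _ _ hvi
        have hrh := restricted_hall (G := G) hSW hcond hS'S
        have himg : s.card = (s.image Subtype.val).card :=
          (Finset.card_image_of_injective s Subtype.val_injective).symm
        have hsub : s.image Subtype.val ⊆
            ((comps G (W \ S)).filter (fun C => Odd (∑ x ∈ C, g x))).filter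
              (fun D => NSP G S g D ⊆ S') := by
          intro D hDm
          obtain ⟨i, hi, rfl⟩ := Finset.mem_image.1 hDm
          refine Finset.mem_filter.2 ⟨i.2, ?_⟩
          rw [hS']
          exact Finset.subset_biUnion_of_mem (fun i => NSP G S g i.1) hi
        calc s.card = (s.image Subtype.val).card := himg
          _ ≤ _ := Finset.card_le_card hsub
          _ ≤ ∑ v ∈ S', g v := hrh
      haveI hft : Fintype {D // D ∈ DD} := FinsetCoe.fintype DD
      obtain ⟨σs, hσs1, hσs2⟩ := hall_capacity (ι := {D // D ∈ DD})
        (fun i => NSP G S g i.1) g hhall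
      set σ : Finset V → V := fun D => if h : D ∈ DD then σs ⟨D, h⟩ else v₀ with hσ
      have hσS : ∀ D ∈ DD, σ D ∈ S := by
        intro D hD
        rw [hσ]
        simp only [dif_pos hD]
        exact Finset.filter_subset _ _ (hσs1 ⟨D, hD⟩)
      have hξex : ∀ D : Finset V, ∃ x : V,
          D ∈ DD → (x ∈ D ∧ G.Adj (σ D) x ∧ 1 ≤ g x) := by
        intro D
        by_cases h : D ∈ DD
        · have h2 := hσs1 ⟨D, h⟩
          rw [NSP, Finset.mem_filter] at h2
          obtain ⟨-, x, hx1, hx2, hx3⟩ := h2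
          refine ⟨x, fun _ => ⟨hx1, ?_, hx3⟩⟩
          rw [hσ]
          simp only [dif_pos h]
          exact hx2
        · exact ⟨v₀, fun hc => absurd hc h⟩
      choose ξ hξ using hξex
      have hσval : ∀ (D : Finset V) (h : D ∈ DD), σ D = σs ⟨D, h⟩ :=
        fun D h => dif_pos h
      have hfib : ∀ v, (DD.filter (fun D => σ D = v)).card
          = ((univ : Finset {D // D ∈ DD}).filter (fun i => σs i = v)).card := by
        intro v
        apply Finset.card_bij
          (i := fun D hD => (⟨D, (Finset.mem_filter.1 hD).1⟩ : {D // D ∈ DD}))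
        · intro D hD
          have h2 := (Finset.mem_filter.1 hD).2
          refine Finset.mem_filter.2 ⟨Finset.mem_univ _, ?_⟩
          exact (hσval D (Finset.mem_filter.1 hD).1).symm.trans h2
        · intro a ha b hb heq
          exact congrArg Subtype.val heq
        · intro i hi
          refine ⟨i.1, Finset.mem_filter.2 ⟨i.2, ?_⟩, ?_⟩
          · rw [hσval i.1 i.2]
            have h3 : (⟨i.1, i.2⟩ : {D // D ∈ DD}) = i := Subtype.ext rfl
            rw [h3]
            exact (Finset.mem_filter.1 hi).2
          · exact Subtype.ext rfl
      have hcnt : ∀ v ∈ S, (DD.filter (fun D => σ D = v)).card = g v := by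
        intro v hv
        by_contra hne
        have hlt : (DD.filter (fun D => σ D = v)).card < g v :=
          lt_of_le_of_ne (by rw [hfib v]; exact hσs2 v) hne
        have htot : ∑ w ∈ S, (DD.filter (fun D => σ D = w)).card = DD.card :=
          (Finset.card_eq_sum_card_fiberwise hσS).symm
        have hsum_lt := Finset.sum_lt_sum
          (f := fun w => (DD.filter (fun D => σ D = w)).card) (g := g)
          (fun i hi => by
            show (DD.filter (fun D => σ D = i)).card ≤ g i
            rw [hfib i]; exact hσs2 i) ⟨v, hv, hlt⟩
        have hbr : (∑ i ∈ S, (fun w => (DD.filter (fun D => σ D = w)).card) i)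
            = ∑ w ∈ S, (DD.filter (fun D => σ D = w)).card := rfl
        omega
      have hcard' : ∀ C ∈ CC, C.card ≤ N := by
        intro C hC
        have h1 := Finset.card_le_card (comps_subset (G := G) hC)
        have h2 : (W \ S).card = W.card - S.card := Finset.card_sdiff_of_subset hSW
        have h3 : 1 ≤ S.card := Finset.card_pos.2 hSne
        omega
      have hrec : ∀ C : Finset V, ∃ Fc : SimpleGraph V, C ∈ CC →
          Good G (if C ∈ DD then (fun v => if v = ξ C then g v - 1 else g v) else g)
            C Fc := by
        intro C
        by_cases hC : C ∈ CC
        · by_cases hCD : C ∈ DD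
          · obtain ⟨hx1, hx2, hx3⟩ := hξ C hCD
            have hodd : Odd (∑ x ∈ C, g x) := (Finset.mem_filter.1 hCD).2
            have hcnd := cond_odd hSW hcond hC hodd hx1 hx3 htight (hnotight C hCD)
            obtain ⟨Fc, hFc⟩ := ihN (∑ v ∈ C, (fun v => if v = ξ C then g v - 1 else g v) v)
              C (fun v => if v = ξ C then g v - 1 else g v) (hcard' C hC) (le_refl _) hcnd
            exact ⟨Fc, fun _ => by rw [if_pos hCD]; exact hFc⟩
          · have hev : ¬ Odd (∑ x ∈ C, g x) := fun hc => hCD (Finset.mem_filter.2 ⟨hC, hc⟩)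
            have hcnd := cond_even hSW hcond hC hev htight
            obtain ⟨Fc, hFc⟩ := ihN (∑ v ∈ C, g v) C g (hcard' C hC) (le_refl _) hcnd
            exact ⟨Fc, fun _ => by rw [if_neg hCD]; exact hFc⟩
        · exact ⟨⊥, fun hc => absurd hc hC⟩
      choose FC hFC using hrec
      refine assembly (CC := CC) (𝒟 := DD) (σ := σ) (ξ := ξ) (FC := FC) hSW ?_ ?_ ?_ ?_ hσS ?_ ?_ ?_ hcnt ?_
      · exact fun C hC => comps_subset (G := G) hC
      · exact fun C hC C' hC' hne => comps_disjoint (G := G) hC hC' hne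
      · exact fun v hv => ⟨compSet G (W \ S) v, compSet_mem_comps hv, self_mem_compSet hv⟩
      · exact Finset.filter_subset _ _
      · exact fun D hD => (hξ D hD).1
      · exact fun D hD => (hξ D hD).2.1
      · exact fun D hD => (hξ D hD).2.2
      · exact fun C hC => hFC C hC

end StmtAux7

/-- If `f ≥ 1`, `|Q|` is even, and `ω(G \ S) ≤ Σ_{v∈S}(f(v)−1) + 1` for all
`S`, then `G` has a spanning forest `F` with `d_F(v) ≤ f(v)` for all `v` and `d_F(v)` odd
iff `v ∈ Q`. -/
theorem stmt_11 {V : Type*} [Fintype V] (G : SimpleGraph V) (f : V → ℕ)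
    (hf : ∀ v, 1 ≤ f v) (Q : Finset V) (hQ : Even Q.card)
    (hcond : ∀ S : Finset V,
      numComponents (G.induce (↑S)ᶜ) ≤ ∑ v ∈ S, (f v - 1) + 1) :
    ∃ F : SimpleGraph V, F ≤ G ∧ F.IsAcyclic ∧
      ∀ v, deg F v ≤ f v ∧ (Odd (deg F v) ↔ v ∈ Q) := by
  classical
  open StmtAux StmtAux2 StmtAux3 StmtAux4 StmtAux7 in
  -- adjusted degree bounds
  set g : V → ℕ := fun v => if (Odd (f v) ↔ v ∈ Q) then f v else f v - 1 with hg
  have hgle : ∀ v, g v ≤ f v := by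
    intro v
    rw [hg]
    by_cases h : (Odd (f v) ↔ v ∈ Q) <;> simp [h] <;> omega
  have hg1 : ∀ v, f v - 1 ≤ g v := by
    intro v
    rw [hg]
    by_cases h : (Odd (f v) ↔ v ∈ Q) <;> simp [h] <;> omega
  have hgpar : ∀ v, (Odd (g v) ↔ v ∈ Q) := by
    intro v
    show Odd (if (Odd (f v) ↔ v ∈ Q) then f v else f v - 1) ↔ v ∈ Q
    by_cases h : (Odd (f v) ↔ v ∈ Q)
    · rw [if_pos h]; exact h
    · rw [if_neg h]
      have h1 := hf v
      rw [Nat.odd_iff] at h ⊢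
      by_cases h2 : v ∈ Q <;> simp [h2] at h ⊢ <;> omega
  -- total parity
  have htot : (∑ v ∈ (Finset.univ : Finset V), g v) % 2 = 0 := by
    rw [Finset.sum_nat_mod]
    have h1 : ∀ v, g v % 2 = if v ∈ Q then 1 else 0 := by
      intro v
      have := hgpar v
      rw [Nat.odd_iff] at this
      by_cases h2 : v ∈ Q <;> simp [h2] at this ⊢ <;> omega
    have h2 : (∑ v ∈ (Finset.univ : Finset V), g v % 2) = Q.card := by
      rw [Finset.sum_congr rfl (fun v _ => h1 v), Finset.sum_ite_mem,
        Finset.univ_inter, Finset.card_eq_sum_ones]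
    rw [h2]
    obtain ⟨k, hk⟩ := hQ
    omega
  -- the KKS condition for g
  have hcondg : Cond G g Finset.univ := by
    intro S _
    have hnum : numComponents (G.induce ((↑S : Set V)ᶜ)) =
        (comps G (Finset.univ \ S)).card := by
      rw [← Finset.coe_compl, numComponents_eq_comps_card, Finset.compl_eq_univ_sdiff]
    have hc := hcond S
    rw [hnum] at hc
    have hoc : oddc G g (Finset.univ \ S) ≤ (comps G (Finset.univ \ S)).card :=
      Finset.card_le_card (Finset.filter_subset _ _)
    have hfg : ∑ v ∈ S, (f v - 1) ≤ ∑ v ∈ S, g v :=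
      Finset.sum_le_sum (fun v _ => hg1 v)
    by_contra hlt
    push_neg at hlt
    have hpar := oddc_parity (G := G) (A := Finset.univ \ S) g
    have hsd : ∑ v ∈ Finset.univ \ S, g v + ∑ v ∈ S, g v
        = ∑ v ∈ (Finset.univ : Finset V), g v :=
      Finset.sum_sdiff (Finset.subset_univ S)
    omega
  -- existence of a parity subgraph
  obtain ⟨F0, hF0⟩ := kksAux G (Finset.univ : Finset V).card
    (∑ v ∈ (Finset.univ : Finset V), g v) Finset.univ g (le_refl _) (le_refl _) hcondg
  have h0 : ∃ F : SimpleGraph V, F ≤ G ∧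
      ∀ v, deg F v ≤ f v ∧ (Odd (deg F v) ↔ v ∈ Q) := by
    refine ⟨F0, hF0.1, fun v => ?_⟩
    obtain ⟨h1, h2⟩ := hF0.2.2 v (Finset.mem_univ v)
    exact ⟨h1.trans (hgle v), h2.trans (hgpar v)⟩
  exact StmtAux3.exists_acyclic f (fun v => v ∈ Q) h0
end
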